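/- arXiv:0808.1307 — 7 statements merged into one kernel-verified Lean document; each statement's English description precedes it below -/
import Mathlib

section
/- Let n ≥ 1, θ > 0, let Q : [0,∞) → Mat(n,ℂ) be continuous, let F : [0,∞) → ℂⁿ be continuous and integrable, and let U : [0,∞) → ℂⁿ be a bounded, square-integrable C¹ solution of U'(z) = Q(z)U(z) + F(z) with U(z) → 0 as z → ∞. Suppose S ∈ Mat(n,ℂ) is Hermitian with ⟨Su,u⟩ ≥ |u|² for all u ∈ ℂⁿ, and Re(S Q(z)) ≥ θ·Id as Hermitian forms for every z ≥ 0. Then there is a constant C > 0, depending only on the operator norm ‖S‖ (in particular independent of θ, Q, F, U), such that sup_{z≥0} |U(z)|² + θ ∫₀^∞ |U(z)|² dz ≤ C (∫₀^∞ |F(z)| dz)². -/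
/-!
The energy `E z = Re ⟪S U z, U z⟫` dominates `‖U z‖²`, tends to `0` at infinity, and along the
equation `E' = 2 Re ⟪S Q U, U⟫ + 2 Re ⟪S F, U⟫ ≥ 2θ ‖U‖² - 2 ‖S‖ ‖F‖ m`, where `m = sup ‖U‖`.
Integrating from `x` to `∞` gives `‖U x‖² + 2θ ∫_x^∞ ‖U‖² ≤ 2 ‖S‖ m ∫ ‖F‖`. Taking the supremum
over `x` yields `m² ≤ 2 ‖S‖ m ∫ ‖F‖`, i.e. `m ≤ 2 ‖S‖ ∫ ‖F‖`, and feeding this back bounds the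
left-hand side by `6 ‖S‖² (∫ ‖F‖)²`.
-/

open MeasureTheory Set Matrix
open Filter Topology

theorem add_integral_Ici_nonpos_of_le_deriv {f f' g : ℝ → ℝ} {a : ℝ}
    (hf : ∀ z ∈ Ici a, HasDerivWithinAt f (f' z) (Ici a) z) (hf_top : Tendsto f atTop (𝓝 0))
    (hg : IntegrableOn g (Ici a)) (hgf' : ∀ z ∈ Ici a, g z ≤ f' z) :
    f a + ∫ z in Ici a, g z ≤ 0 := by
  have hFTC : ∀ b ≥ a, ∫ z in a..b, g z ≤ f b - f a := fun b hab =>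
    intervalIntegral.integral_le_sub_of_hasDeriv_right_of_le hab
      (fun z hz => (hf z hz.1).continuousWithinAt.mono Icc_subset_Ici_self)
      (fun z hz => (hf z hz.1.le).mono (Ioi_subset_Ici hz.1.le))
      (hg.mono_set Icc_subset_Ici_self) (fun z hz => hgf' z hz.1.le)
  have hlim : Tendsto (fun b => ∫ z in a..b, g z) atTop (𝓝 (∫ z in Ioi a, g z)) :=
    intervalIntegral_tendsto_integral_Ioi a (hg.mono_set Ioi_subset_Ici_self) tendsto_id
  have := le_of_tendsto_of_tendsto hlim (hf_top.sub_const (f a))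
    ((eventually_ge_atTop a).mono hFTC)
  rw [integral_Ici_eq_integral_Ioi]
  linarith

theorem sSup_image_le_of_sq_le {α : Type*} {s : Set α} {f : α → ℝ} {c : ℝ}
    (hs : s.Nonempty) (hc : 0 ≤ c)
    (h : ∀ x ∈ s, f x ^ 2 ≤ c * sSup (f '' s)) : sSup (f '' s) ≤ c := by
  set m := sSup (f '' s)
  have hm : m ≤ √(c * m) := csSup_le (hs.image f) <| forall_mem_image.2 fun x hx =>
    (le_abs_self _).trans (Real.abs_le_sqrt (h x hx))
  rcases le_or_gt m 0 with hm0 | hm0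
  · linarith
  · have := (Real.le_sqrt' hm0).1 hm
    nlinarith

section
variable {𝕜 E : Type*} [RCLike 𝕜] [NormedAddCommGroup E] [InnerProductSpace 𝕜 E]

open RCLike ContinuousLinearMap

local notation "⟪" x ", " y "⟫" => inner 𝕜 x y

theorem ContinuousLinearMap.le_re_inner_apply_add {T B : E →L[𝕜] E} {θ m : ℝ} {u f : E}
    (hB : θ * ‖u‖ ^ 2 ≤ re ⟪T (B u), u⟫) (hu : ‖u‖ ≤ m) :
    θ * ‖u‖ ^ 2 - ‖T‖ * m * ‖f‖ ≤ re ⟪T (B u + f), u⟫ := by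
  have hf : |re ⟪T f, u⟫| ≤ ‖T‖ * m * ‖f‖ :=
    calc |re ⟪T f, u⟫| ≤ ‖T f‖ * ‖u‖ := (abs_re_le_norm _).trans (norm_inner_le_norm _ _)
      _ ≤ ‖T‖ * ‖f‖ * m := by gcongr; exact T.le_opNorm f
      _ = ‖T‖ * m * ‖f‖ := by ring
  rw [map_add, inner_add_left, map_add]
  linarith [neg_abs_le (re ⟪T f, u⟫)]

theorem ContinuousLinearMap.reApplyInnerSelf_half_smul_add_star [CompleteSpace E]
    (B : E →L[𝕜] E) (u : E) :
    ((2⁻¹ : 𝕜) • (B + star B)).reApplyInnerSelf u = B.reApplyInnerSelf u := by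
  simp only [reApplyInnerSelf_apply, _root_.add_apply, _root_.smul_apply, inner_smul_left,
    inner_add_left, star_eq_adjoint, adjoint_inner_left, ← inner_conj_symm u (B u)]
  rw [RCLike.add_conj, map_inv₀, map_ofNat, ← mul_assoc, inv_mul_cancel₀ two_ne_zero, one_mul,
    ofReal_re]

variable [NormedSpace ℝ E] [IsScalarTower ℝ 𝕜 E]

theorem LinearMap.IsSymmetric.hasDerivWithinAt_reApplyInnerSelf {T : E →L[𝕜] E}
    (hT : (T : E →ₗ[𝕜] E).IsSymmetric)
    {U : ℝ → E} {U' : E} {s : Set ℝ} {z : ℝ} (hU : HasDerivWithinAt U U' s z) :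
    HasDerivWithinAt (fun w => T.reApplyInnerSelf (U w)) (2 * re ⟪T U', U z⟫) s z := by
  have hTU : HasDerivWithinAt (fun w => T (U w)) (T U') s z :=
    (T.restrictScalars ℝ).hasFDerivAt.comp_hasDerivWithinAt z hU
  refine ((reCLM (K := 𝕜)).hasFDerivAt.comp_hasDerivWithinAt z (hTU.inner 𝕜 hU)).congr_deriv ?_
  have hsymm : re ⟪T (U z), U'⟫ = re ⟪T U', U z⟫ := by
    rw [← inner_conj_symm, conj_re]; exact congrArg re (hT U' (U z)).symm
  rw [reCLM_apply, map_add, hsymm]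
  ring

theorem reApplyInnerSelf_add_integral_Ici_le {T : E →L[𝕜] E} (hT : (T : E →ₗ[𝕜] E).IsSymmetric)
    {θ m : ℝ} {A : ℝ → E →L[𝕜] E}
    (hA : ∀ z ∈ Ici (0 : ℝ), ∀ u, θ * ‖u‖ ^ 2 ≤ re ⟪T (A z u), u⟫)
    {F U : ℝ → E} (hF : IntegrableOn (fun z => ‖F z‖) (Ici 0))
    (hU_sq : IntegrableOn (fun z => ‖U z‖ ^ 2) (Ici 0))
    (hU' : ∀ z ∈ Ici (0 : ℝ), HasDerivWithinAt U (A z (U z) + F z) (Ici 0) z)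
    (hU_top : Tendsto U atTop (𝓝 0)) (hm : ∀ z ∈ Ici (0 : ℝ), ‖U z‖ ≤ m)
    {x : ℝ} (hx : x ∈ Ici (0 : ℝ)) :
    T.reApplyInnerSelf (U x) + 2 * θ * ∫ z in Ici x, ‖U z‖ ^ 2 ≤
      2 * ‖T‖ * m * ∫ z in Ici 0, ‖F z‖ := by
  have hsub : Ici x ⊆ Ici 0 := Ici_subset_Ici.2 hx
  have henergy_top : Tendsto (fun z => T.reApplyInnerSelf (U z)) atTop (𝓝 0) := by
    simpa only [Function.comp_def, ContinuousLinearMap.reApplyInnerSelf_apply, map_zero,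
      inner_zero_left] using (T.reApplyInnerSelf_continuous.tendsto 0).comp hU_top
  have key := add_integral_Ici_nonpos_of_le_deriv
    (g := fun z => 2 * θ * ‖U z‖ ^ 2 - 2 * ‖T‖ * m * ‖F z‖)
    (fun z hz => (hT.hasDerivWithinAt_reApplyInnerSelf (hU' z (hsub hz))).mono hsub)
    henergy_top (((hU_sq.mono_set hsub).const_mul _).sub' ((hF.mono_set hsub).const_mul _))
    fun z hz => by
      linarith [T.le_re_inner_apply_add (f := F z) (hA z (hsub hz) (U z)) (hm z (hsub hz))]
  rw [integral_sub ((hU_sq.mono_set hsub).const_mul _) ((hF.mono_set hsub).const_mul _),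
    integral_const_mul, integral_const_mul] at key
  have hF_le : ∫ z in Ici x, ‖F z‖ ≤ ∫ z in Ici 0, ‖F z‖ :=
    setIntegral_mono_set hF (.of_forall fun _ => norm_nonneg _) hsub.eventuallyLE
  have hm0 : 0 ≤ m := (norm_nonneg _).trans (hm x hx)
  have : 2 * ‖T‖ * m * ∫ z in Ici x, ‖F z‖ ≤ 2 * ‖T‖ * m * ∫ z in Ici 0, ‖F z‖ := by gcongr
  linarith

theorem norm_sq_add_integral_norm_sq_le_of_symmetrizer {T : E →L[𝕜] E}
    (hT : (T : E →ₗ[𝕜] E).IsSymmetric)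
    (hT_coercive : ∀ u, ‖u‖ ^ 2 ≤ T.reApplyInnerSelf u)
    {θ : ℝ} (hθ : 0 < θ) {A : ℝ → E →L[𝕜] E}
    (hA : ∀ z ∈ Ici (0 : ℝ), ∀ u, θ * ‖u‖ ^ 2 ≤ re ⟪T (A z u), u⟫)
    {F U : ℝ → E} (hF : IntegrableOn (fun z => ‖F z‖) (Ici 0))
    (hU_bdd : BddAbove ((fun z => ‖U z‖) '' Ici 0))
    (hU_sq : IntegrableOn (fun z => ‖U z‖ ^ 2) (Ici 0))
    (hU' : ∀ z ∈ Ici (0 : ℝ), HasDerivWithinAt U (A z (U z) + F z) (Ici 0) z)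
    (hU_top : Tendsto U atTop (𝓝 0)) {x : ℝ} (hx : x ∈ Ici (0 : ℝ)) :
    ‖U x‖ ^ 2 + θ * ∫ z in Ici 0, ‖U z‖ ^ 2 ≤ 6 * ‖T‖ ^ 2 * (∫ z in Ici 0, ‖F z‖) ^ 2 := by
  set I := ∫ z in Ici 0, ‖F z‖
  set m := sSup ((fun z => ‖U z‖) '' Ici 0)
  have hm : ∀ z ∈ Ici (0 : ℝ), ‖U z‖ ≤ m := fun z hz =>
    le_csSup hU_bdd (mem_image_of_mem _ hz)
  have henergy := fun x (hx : x ∈ Ici (0 : ℝ)) =>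
    reApplyInnerSelf_add_integral_Ici_le hT hA hF hU_sq hU' hU_top hm hx
  have hI : 0 ≤ I := setIntegral_nonneg measurableSet_Ici fun _ _ => norm_nonneg _
  have hsq : ∀ x ∈ Ici (0 : ℝ), ‖U x‖ ^ 2 ≤ 2 * ‖T‖ * m * I := fun x hx => by
    have : 0 ≤ 2 * θ * ∫ z in Ici x, ‖U z‖ ^ 2 := by positivity
    linarith [hT_coercive (U x), henergy x hx]
  have hm_le : m ≤ 2 * ‖T‖ * I :=
    sSup_image_le_of_sq_le ⟨0, self_mem_Ici⟩ (by positivity) fun x hx => by linarith [hsq x hx]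
  have hint : 2 * θ * ∫ z in Ici 0, ‖U z‖ ^ 2 ≤ 2 * ‖T‖ * m * I := by
    linarith [hT_coercive (U 0), henergy 0 self_mem_Ici, sq_nonneg ‖U 0‖]
  have : ‖T‖ * m * I ≤ ‖T‖ * (2 * ‖T‖ * I) * I := by gcongr
  linarith [hsq x hx]

end

theorem Matrix.reApplyInnerSelf_toEuclideanCLM_half_smul_add_conjTranspose {𝕜 ι : Type*}
    [RCLike 𝕜] [Fintype ι] [DecidableEq ι] (B : Matrix ι ι 𝕜) (u : EuclideanSpace 𝕜 ι) :
    (toEuclideanCLM (𝕜 := 𝕜) ((2⁻¹ : 𝕜) • (B + Bᴴ))).reApplyInnerSelf u =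
      (toEuclideanCLM (𝕜 := 𝕜) B).reApplyInnerSelf u := by
  rw [map_smul, map_add, ← star_eq_conjTranspose, map_star,
    ContinuousLinearMap.reApplyInnerSelf_half_smul_add_star]

theorem stmt_0_general (n : ℕ) (K : ℝ) :
    ∃ C : ℝ, 0 < C ∧
      ∀ (θ : ℝ), 0 < θ →
      ∀ (Q : ℝ → Matrix (Fin n) (Fin n) ℂ)
        (F U : ℝ → EuclideanSpace ℂ (Fin n))
        (S : Matrix (Fin n) (Fin n) ℂ),
        ContinuousOn Q (Ici 0) →
        ContinuousOn F (Ici 0) →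
        IntegrableOn (fun z => ‖F z‖) (Ici 0) →
        (∃ M : ℝ, ∀ z ∈ Ici (0:ℝ), ‖U z‖ ≤ M) →
        IntegrableOn (fun z => ‖U z‖ ^ 2) (Ici 0) →
        (∀ z ∈ Ici (0:ℝ), HasDerivWithinAt U
            (Matrix.toEuclideanLin (Q z) (U z) + F z) (Ici 0) z) →
        Filter.Tendsto U Filter.atTop (nhds 0) →
        S.IsHermitian →
        (∀ u : EuclideanSpace ℂ (Fin n),
            ‖u‖ ^ 2 ≤ (inner (𝕜 := ℂ) (Matrix.toEuclideanLin S u) u).re) →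
        (∀ z ∈ Ici (0:ℝ), ∀ u : EuclideanSpace ℂ (Fin n),
            θ * ‖u‖ ^ 2 ≤
              (inner (𝕜 := ℂ)
                (Matrix.toEuclideanLin
                  ((2⁻¹ : ℂ) • (S * Q z + (S * Q z)ᴴ)) u) u).re) →
        ‖Matrix.toEuclideanCLM (𝕜 := ℂ) S‖ ≤ K →
        ∀ x ∈ Ici (0:ℝ),
          ‖U x‖ ^ 2 + θ * ∫ z in Ici (0:ℝ), ‖U z‖ ^ 2 ≤
            C * (∫ z in Ici (0:ℝ), ‖F z‖) ^ 2 := by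
  refine ⟨6 * K ^ 2 + 1, by positivity, ?_⟩
  intro θ hθ Q F U S _ _ hF hU_bdd hU_sq hU' hU_top hS hS_coercive hSQ hSK x hx
  set T := toEuclideanCLM (𝕜 := ℂ) S
  have hT : (T : EuclideanSpace ℂ (Fin n) →ₗ[ℂ] _).IsSymmetric := by
    rw [coe_toEuclideanCLM_eq_toEuclideanLin]
    exact isSymmetric_toEuclideanLin_iff.2 hS
  have hA : ∀ z ∈ Ici (0 : ℝ), ∀ u, θ * ‖u‖ ^ 2 ≤
      RCLike.re (inner ℂ (T (toEuclideanCLM (𝕜 := ℂ) (Q z) u)) u) := fun z hz u => by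
    have h := (hSQ z hz u).trans_eq
      (reApplyInnerSelf_toEuclideanCLM_half_smul_add_conjTranspose (S * Q z) u)
    rwa [map_mul] at h
  obtain ⟨M, hM⟩ := hU_bdd
  refine (norm_sq_add_integral_norm_sq_le_of_symmetrizer hT hS_coercive hθ hA hF
    ⟨M, forall_mem_image.2 hM⟩ hU_sq hU' hU_top hx).trans
    (mul_le_mul_of_nonneg_right ?_ (sq_nonneg _))
  linarith [pow_le_pow_left₀ (norm_nonneg T) hSK 2]

/-- Symmetrizer energy estimate (positive symmetrizer case), Lemma 4.2 of the paper:
if `S` is Hermitian with `⟨Su,u⟩ ≥ |u|²` and `Re (S Q z) ≥ θ Id` as Hermitian forms,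
then any bounded square-integrable decaying solution of `U' = Q U + F` on `[0,∞)` satisfies
`sup |U|² + θ ∫ |U|² ≤ C (∫ |F|)²` with `C` depending only on the operator norm of `S`. -/
theorem stmt_0 (n : ℕ) (hn : 1 ≤ n) (K : ℝ) :
    ∃ C : ℝ, 0 < C ∧
      ∀ (θ : ℝ), 0 < θ →
      ∀ (Q : ℝ → Matrix (Fin n) (Fin n) ℂ)
        (F U : ℝ → EuclideanSpace ℂ (Fin n))
        (S : Matrix (Fin n) (Fin n) ℂ),
        ContinuousOn Q (Ici 0) →
        ContinuousOn F (Ici 0) →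
        IntegrableOn (fun z => ‖F z‖) (Ici 0) →
        (∃ M : ℝ, ∀ z ∈ Ici (0:ℝ), ‖U z‖ ≤ M) →
        IntegrableOn (fun z => ‖U z‖ ^ 2) (Ici 0) →
        (∀ z ∈ Ici (0:ℝ), HasDerivWithinAt U
            (Matrix.toEuclideanLin (Q z) (U z) + F z) (Ici 0) z) →
        Filter.Tendsto U Filter.atTop (nhds 0) →
        S.IsHermitian →
        (∀ u : EuclideanSpace ℂ (Fin n),
            ‖u‖ ^ 2 ≤ (inner (𝕜 := ℂ) (Matrix.toEuclideanLin S u) u).re) →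
        (∀ z ∈ Ici (0:ℝ), ∀ u : EuclideanSpace ℂ (Fin n),
            θ * ‖u‖ ^ 2 ≤
              (inner (𝕜 := ℂ)
                (Matrix.toEuclideanLin
                  ((2⁻¹ : ℂ) • (S * Q z + (S * Q z)ᴴ)) u) u).re) →
        ‖Matrix.toEuclideanCLM (𝕜 := ℂ) S‖ ≤ K →
        ∀ x ∈ Ici (0:ℝ),
          ‖U x‖ ^ 2 + θ * ∫ z in Ici (0:ℝ), ‖U z‖ ^ 2 ≤
            C * (∫ z in Ici (0:ℝ), ‖F z‖) ^ 2 :=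
  stmt_0_general n K
end

section
/- Let n ≥ 1, θ > 0, let Q : [0,∞) → Mat(n,ℂ) be continuous, let F : [0,∞) → ℂⁿ be continuous and integrable, and let U : [0,∞) → ℂⁿ be a bounded, square-integrable C¹ solution of U'(z) = Q(z)U(z) + F(z) with U(z) → 0 as z → ∞. Suppose S ∈ Mat(n,ℂ) is Hermitian with ⟨Su,u⟩ ≤ −|u|² for all u ∈ ℂⁿ, and Re(S Q(z)) ≥ θ·Id as Hermitian forms for every z ≥ 0. Then there is a constant C > 0, depending only on the operator norm ‖S‖ (in particular independent of θ, Q, F, U), such that sup_{z≥0} |U(z)|² + θ ∫₀^∞ |U(z)|² dz ≤ C ( |U(0)|² + (∫₀^∞ |F(z)| dz)² ). -/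
/-!
With `E(z) = Re ⟨S U(z), U(z)⟩` and `M = sup |U|`, the equation gives
`E' = 2 Re ⟨S (Q U + F), U⟩ ≥ 2θ |U|² - 2 ‖S‖ M |F|`. Integrating over `[0, x]` and using
`E(x) ≤ -|U(x)|²`, `-E(0) ≤ ‖S‖ |U(0)|²` yields
`|U(x)|² + 2θ ∫₀ˣ |U|² ≤ ‖S‖ |U(0)|² + 2 ‖S‖ M ∫ |F|`.
Taking the supremum over `x`, the term linear in `M` is absorbed by `M²`.
-/

open MeasureTheory Set Matrix
open scoped InnerProductSpace

theorem Matrix.re_inner_toEuclideanLin_half_add_conjTranspose {n : Type*} [Fintype n]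
    [DecidableEq n] (B : Matrix n n ℂ) (u : EuclideanSpace ℂ n) :
    (⟪toEuclideanLin ((2⁻¹ : ℂ) • (B + Bᴴ)) u, u⟫_ℂ).re = (⟪toEuclideanLin B u, u⟫_ℂ).re := by
  rw [map_smul, map_add, LinearMap.smul_apply, LinearMap.add_apply,
    toEuclideanLin_conjTranspose_eq_adjoint, inner_smul_left, inner_add_left,
    LinearMap.adjoint_inner_left, ← inner_conj_symm u, Complex.add_conj, map_inv₀, map_ofNat,
    Complex.re_mul_ofReal, show (2⁻¹ : ℂ).re = 2⁻¹ by norm_num]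
  ring

theorem add_mul_csSup_le_of_sq_le {α : Type*} {s : Set α} (hs : s.Nonempty) {f : α → ℝ}
    (hf : BddAbove (f '' s)) (hf0 : ∀ x ∈ s, 0 ≤ f x) {a b : ℝ}
    (h : ∀ x ∈ s, f x ^ 2 ≤ a + b * sSup (f '' s)) :
    a + b * sSup (f '' s) ≤ 2 * a + b ^ 2 := by
  set m := sSup (f '' s)
  obtain ⟨x₀, hx₀⟩ := hs
  have hm0 : 0 ≤ m := (hf0 x₀ hx₀).trans (le_csSup hf (mem_image_of_mem f hx₀))
  have hm : m ≤ √(a + b * m) :=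
    csSup_le ⟨_, mem_image_of_mem f hx₀⟩
      (forall_mem_image.2 fun x hx => Real.le_sqrt_of_sq_le (h x hx))
  have hm2 : m ^ 2 ≤ a + b * m :=
    (Real.le_sqrt hm0 ((sq_nonneg _).trans (h x₀ hx₀))).1 hm
  nlinarith [sq_nonneg (m - b)]

theorem integral_Ici_le_of_forall_intervalIntegral_le {f : ℝ → ℝ} {a c : ℝ}
    (hf : IntegrableOn f (Ici a)) (h : ∀ x, a ≤ x → ∫ z in a..x, f z ≤ c) :
    ∫ z in Ici a, f z ≤ c := by
  rw [integral_Ici_eq_integral_Ioi]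
  exact le_of_tendsto
    (intervalIntegral_tendsto_integral_Ioi a (hf.mono_set Ioi_subset_Ici_self) Filter.tendsto_id)
    ((Filter.eventually_ge_atTop a).mono h)

section Energy

variable {E : Type*} [NormedAddCommGroup E] [InnerProductSpace ℂ E]
  {T : E →L[ℂ] E} {A : ℝ → E →L[ℂ] E} {F U : ℝ → E} {θ M : ℝ}

theorem ContinuousLinearMap.abs_re_inner_apply_le (T : E →L[ℂ] E) (v u : E) :
    |(⟪T v, u⟫_ℂ).re| ≤ ‖T‖ * ‖v‖ * ‖u‖ :=
  calc |(⟪T v, u⟫_ℂ).re| ≤ ‖T v‖ * ‖u‖ :=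
        (Complex.abs_re_le_norm _).trans (norm_inner_le_norm _ _)
    _ ≤ ‖T‖ * ‖v‖ * ‖u‖ := by gcongr; exact T.le_opNorm v

theorem HasDerivWithinAt.reApplyInnerSelf (hT : (T : E →ₗ[ℂ] E).IsSymmetric)
    {U' : E} {s : Set ℝ} {z : ℝ} (hU : HasDerivWithinAt U U' s z) :
    HasDerivWithinAt (fun t => T.reApplyInnerSelf (U t)) (2 * (⟪T U', U z⟫_ℂ).re) s z := by
  have hTU := ((T.restrictScalars ℝ).hasFDerivAt).comp_hasDerivWithinAt z hU
  have h : HasDerivWithinAt (fun t => T.reApplyInnerSelf (U t))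
      (⟪T (U z), U'⟫_ℂ + ⟪T U', U z⟫_ℂ).re s z :=
    Complex.reCLM.hasFDerivAt.comp_hasDerivWithinAt z (hTU.inner ℂ hU)
  convert h using 1
  rw [Complex.add_re, hT.apply_clm U' (U z), ← inner_conj_symm (T (U z)) U', Complex.conj_re]
  ring

theorem integral_le_reApplyInnerSelf_sub (hT : (T : E →ₗ[ℂ] E).IsSymmetric)
    (hA : ∀ z ∈ Ici (0 : ℝ), ∀ u, θ * ‖u‖ ^ 2 ≤ (⟪T (A z u), u⟫_ℂ).re)
    (hU : ∀ z ∈ Ici (0 : ℝ), HasDerivWithinAt U (A z (U z) + F z) (Ici 0) z)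
    (hF : IntegrableOn (fun z => ‖F z‖) (Ici 0)) (hM : ∀ z ∈ Ici (0 : ℝ), ‖U z‖ ≤ M)
    {x : ℝ} (hx : 0 ≤ x) :
    ∫ z in 0..x, (2 * θ * ‖U z‖ ^ 2 - 2 * ‖T‖ * M * ‖F z‖) ≤
      T.reApplyInnerSelf (U x) - T.reApplyInnerSelf (U 0) := by
  have hIcc : Icc 0 x ⊆ Ici (0 : ℝ) := Icc_subset_Ici_self
  have hUc : ContinuousOn U (Icc 0 x) := fun z hz => (hU z (hIcc hz)).continuousWithinAt.mono hIcc
  have hderiv_le : ∀ z ∈ Ici (0 : ℝ),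
      2 * θ * ‖U z‖ ^ 2 - 2 * ‖T‖ * M * ‖F z‖ ≤ 2 * (⟪T (A z (U z) + F z), U z⟫_ℂ).re := by
    intro z hz
    have hTF : ‖T‖ * ‖F z‖ * ‖U z‖ ≤ ‖T‖ * M * ‖F z‖ := by
      rw [mul_right_comm]; gcongr; exact hM z hz
    rw [map_add, inner_add_left, Complex.add_re]
    linarith [hA z hz (U z), neg_abs_le (⟪T (F z), U z⟫_ℂ).re, T.abs_re_inner_apply_le (F z) (U z)]
  refine intervalIntegral.integral_le_sub_of_hasDeriv_right_of_le hx
    (T.reApplyInnerSelf_continuous.comp_continuousOn hUc)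
    (fun z hz => ((hU z (hIcc (Ioo_subset_Icc_self hz))).reApplyInnerSelf hT).mono
      (Ioi_subset_Ici_self.trans (Ici_subset_Ici.2 hz.1.le)))
    ?_ (fun z hz => hderiv_le z (hIcc (Ioo_subset_Icc_self hz)))
  exact ((continuous_const.mul (continuous_norm.pow 2)).comp_continuousOn hUc
    |>.integrableOn_Icc).sub ((hF.mono_set hIcc).const_mul _)

theorem norm_sq_add_integral_le (hT : (T : E →ₗ[ℂ] E).IsSymmetric)
    (hTneg : ∀ u, (⟪T u, u⟫_ℂ).re ≤ -‖u‖ ^ 2)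
    (hA : ∀ z ∈ Ici (0 : ℝ), ∀ u, θ * ‖u‖ ^ 2 ≤ (⟪T (A z u), u⟫_ℂ).re)
    (hU : ∀ z ∈ Ici (0 : ℝ), HasDerivWithinAt U (A z (U z) + F z) (Ici 0) z)
    (hF : IntegrableOn (fun z => ‖F z‖) (Ici 0)) (hM : ∀ z ∈ Ici (0 : ℝ), ‖U z‖ ≤ M)
    {x : ℝ} (hx : 0 ≤ x) :
    ‖U x‖ ^ 2 + 2 * θ * ∫ z in 0..x, ‖U z‖ ^ 2 ≤
      ‖T‖ * ‖U 0‖ ^ 2 + 2 * ‖T‖ * (∫ z in Ici 0, ‖F z‖) * M := by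
  have hIcc : Icc 0 x ⊆ Ici (0 : ℝ) := Icc_subset_Ici_self
  have hUc : ContinuousOn (fun z => ‖U z‖ ^ 2) (uIcc 0 x) := by
    rw [uIcc_of_le hx]
    exact fun z hz => ((hU z (hIcc hz)).continuousWithinAt.mono hIcc).norm.pow 2
  have hFx : IntervalIntegrable (fun z => ‖F z‖) volume 0 x :=
    (intervalIntegrable_iff_integrableOn_Icc_of_le hx).2 (hF.mono_set hIcc)
  have hF_le : ∫ z in 0..x, ‖F z‖ ≤ ∫ z in Ici 0, ‖F z‖ := by
    rw [intervalIntegral.integral_of_le hx]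
    exact setIntegral_mono_set hF (.of_forall fun z => norm_nonneg _)
      (Ioc_subset_Icc_self.trans hIcc).eventuallyLE
  have hTM : 0 ≤ 2 * ‖T‖ * M := by
    have := (norm_nonneg _).trans (hM 0 self_mem_Ici); positivity
  have h := integral_le_reApplyInnerSelf_sub hT hA hU hF hM hx
  rw [intervalIntegral.integral_sub (hUc.intervalIntegrable.const_mul _) (hFx.const_mul _),
    intervalIntegral.integral_const_mul, intervalIntegral.integral_const_mul] at h
  have hEx : T.reApplyInnerSelf (U x) ≤ -‖U x‖ ^ 2 := hTneg (U x)
  have hE0 : -T.reApplyInnerSelf (U 0) ≤ ‖T‖ * ‖U 0‖ ^ 2 :=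
    calc _ ≤ |(⟪T (U 0), U 0⟫_ℂ).re| := neg_le_abs _
      _ ≤ _ := (T.abs_re_inner_apply_le _ _).trans_eq (by ring)
  linarith [mul_le_mul_of_nonneg_left hF_le hTM]

theorem norm_sq_add_mul_integral_le (hT : (T : E →ₗ[ℂ] E).IsSymmetric)
    (hTneg : ∀ u, (⟪T u, u⟫_ℂ).re ≤ -‖u‖ ^ 2)
    (hA : ∀ z ∈ Ici (0 : ℝ), ∀ u, θ * ‖u‖ ^ 2 ≤ (⟪T (A z u), u⟫_ℂ).re)
    (hU : ∀ z ∈ Ici (0 : ℝ), HasDerivWithinAt U (A z (U z) + F z) (Ici 0) z)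
    (hF : IntegrableOn (fun z => ‖F z‖) (Ici 0)) (hUb : BddAbove ((fun z => ‖U z‖) '' Ici 0))
    (hUi : IntegrableOn (fun z => ‖U z‖ ^ 2) (Ici 0)) (hθ : 0 ≤ θ) {x : ℝ} (hx : 0 ≤ x) :
    ‖U x‖ ^ 2 + θ * ∫ z in Ici 0, ‖U z‖ ^ 2 ≤
      3 * ‖T‖ * ‖U 0‖ ^ 2 + 6 * ‖T‖ ^ 2 * (∫ z in Ici 0, ‖F z‖) ^ 2 := by
  set M := sSup ((fun z => ‖U z‖) '' Ici 0)
  have hM : ∀ z ∈ Ici (0 : ℝ), ‖U z‖ ≤ M := fun z hz => le_csSup hUb (mem_image_of_mem _ hz)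
  have hbound := fun y (hy : 0 ≤ y) => norm_sq_add_integral_le hT hTneg hA hU hF hM hy
  set G := ∫ z in Ici 0, ‖F z‖
  have hsq : ∀ y ∈ Ici (0 : ℝ), ‖U y‖ ^ 2 ≤ ‖T‖ * ‖U 0‖ ^ 2 + 2 * ‖T‖ * G * M := fun y hy => by
    have := intervalIntegral.integral_nonneg (μ := volume) hy fun z _ => sq_nonneg ‖U z‖
    nlinarith [hbound y hy]
  have hint : 2 * θ * ∫ z in Ici 0, ‖U z‖ ^ 2 ≤ ‖T‖ * ‖U 0‖ ^ 2 + 2 * ‖T‖ * G * M := by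
    rw [← integral_const_mul]
    refine integral_Ici_le_of_forall_intervalIntegral_le (hUi.const_mul _) fun y hy => ?_
    rw [intervalIntegral.integral_const_mul]
    linarith [hbound y hy, sq_nonneg ‖U y‖]
  have hB := add_mul_csSup_le_of_sq_le (nonempty_Ici (a := (0 : ℝ))) hUb
    (fun _ _ => norm_nonneg _) hsq
  linarith [hsq x hx]

end Energy

theorem stmt_1_general (n : ℕ) (K : ℝ) :
    ∃ C : ℝ, 0 < C ∧
      ∀ (θ : ℝ), 0 < θ →
      ∀ (Q : ℝ → Matrix (Fin n) (Fin n) ℂ)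
        (F U : ℝ → EuclideanSpace ℂ (Fin n))
        (S : Matrix (Fin n) (Fin n) ℂ),
        ContinuousOn Q (Ici 0) →
        ContinuousOn F (Ici 0) →
        IntegrableOn (fun z => ‖F z‖) (Ici 0) →
        (∃ M : ℝ, ∀ z ∈ Ici (0:ℝ), ‖U z‖ ≤ M) →
        IntegrableOn (fun z => ‖U z‖ ^ 2) (Ici 0) →
        (∀ z ∈ Ici (0:ℝ), HasDerivWithinAt U
            (Matrix.toEuclideanLin (Q z) (U z) + F z) (Ici 0) z) →
        Filter.Tendsto U Filter.atTop (nhds 0) →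
        S.IsHermitian →
        (∀ u : EuclideanSpace ℂ (Fin n),
            (inner (𝕜 := ℂ) (Matrix.toEuclideanLin S u) u).re ≤ -‖u‖ ^ 2) →
        (∀ z ∈ Ici (0:ℝ), ∀ u : EuclideanSpace ℂ (Fin n),
            θ * ‖u‖ ^ 2 ≤
              (inner (𝕜 := ℂ)
                (Matrix.toEuclideanLin
                  ((2⁻¹ : ℂ) • (S * Q z + (S * Q z)ᴴ)) u) u).re) →
        ‖Matrix.toEuclideanCLM (𝕜 := ℂ) S‖ ≤ K →
        ∀ x ∈ Ici (0:ℝ),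
          ‖U x‖ ^ 2 + θ * ∫ z in Ici (0:ℝ), ‖U z‖ ^ 2 ≤
            C * (‖U 0‖ ^ 2 + (∫ z in Ici (0:ℝ), ‖F z‖) ^ 2) := by
  refine ⟨6 * max K 1 ^ 2, by positivity, ?_⟩
  intro θ hθ Q F U S _ _ hF ⟨M, hM⟩ hUi hU _ hS hSneg hSQ hSK x hx
  set T := toEuclideanCLM (𝕜 := ℂ) S
  have hA : ∀ z ∈ Ici (0 : ℝ), ∀ u,
      θ * ‖u‖ ^ 2 ≤ (⟪T (toEuclideanCLM (𝕜 := ℂ) (Q z) u), u⟫_ℂ).re := fun z hz u => by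
    have hmul : toEuclideanLin (S * Q z) u = T (toEuclideanCLM (𝕜 := ℂ) (Q z) u) := by
      rw [← coe_toEuclideanCLM_eq_toEuclideanLin, map_mul]; rfl
    rw [← hmul, ← re_inner_toEuclideanLin_half_add_conjTranspose]
    exact hSQ z hz u
  have hT : (T : EuclideanSpace ℂ (Fin n) →ₗ[ℂ] _).IsSymmetric :=
    isSymmetric_toEuclideanLin_iff.2 hS
  have hTneg : ∀ u, (⟪T u, u⟫_ℂ).re ≤ -‖u‖ ^ 2 := hSneg
  have hU' : ∀ z ∈ Ici (0 : ℝ),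
      HasDerivWithinAt U (toEuclideanCLM (𝕜 := ℂ) (Q z) (U z) + F z) (Ici 0) z := hU
  have hbound := norm_sq_add_mul_integral_le hT hTneg hA hU' hF
    ⟨M, forall_mem_image.2 hM⟩ hUi hθ.le hx
  have hTK : ‖T‖ ≤ max K 1 := hSK.trans (le_max_left _ _)
  have hU0_coef : 3 * ‖T‖ ≤ 6 * max K 1 ^ 2 := by nlinarith [le_max_right K 1]
  have hF_coef : 6 * ‖T‖ ^ 2 ≤ 6 * max K 1 ^ 2 := by gcongr
  calc _ ≤ _ := hbound
    _ ≤ 6 * max K 1 ^ 2 * ‖U 0‖ ^ 2 + 6 * max K 1 ^ 2 * (∫ z in Ici (0:ℝ), ‖F z‖) ^ 2 := by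
        gcongr
    _ = _ := by ring

/-- Symmetrizer energy estimate (negative symmetrizer case), Lemma 4.2 of the paper:
if `S` is Hermitian with `⟨Su,u⟩ ≤ -|u|²` and `Re (S Q z) ≥ θ Id` as Hermitian forms,
then any bounded square-integrable decaying solution of `U' = Q U + F` on `[0,∞)` satisfies
`sup |U|² + θ ∫ |U|² ≤ C (|U(0)|² + (∫ |F|)²)` with `C` depending only on `‖S‖`. -/
theorem stmt_1 (n : ℕ) (hn : 1 ≤ n) (K : ℝ) :
    ∃ C : ℝ, 0 < C ∧
      ∀ (θ : ℝ), 0 < θ →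
      ∀ (Q : ℝ → Matrix (Fin n) (Fin n) ℂ)
        (F U : ℝ → EuclideanSpace ℂ (Fin n))
        (S : Matrix (Fin n) (Fin n) ℂ),
        ContinuousOn Q (Ici 0) →
        ContinuousOn F (Ici 0) →
        IntegrableOn (fun z => ‖F z‖) (Ici 0) →
        (∃ M : ℝ, ∀ z ∈ Ici (0:ℝ), ‖U z‖ ≤ M) →
        IntegrableOn (fun z => ‖U z‖ ^ 2) (Ici 0) →
        (∀ z ∈ Ici (0:ℝ), HasDerivWithinAt U
            (Matrix.toEuclideanLin (Q z) (U z) + F z) (Ici 0) z) →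
        Filter.Tendsto U Filter.atTop (nhds 0) →
        S.IsHermitian →
        (∀ u : EuclideanSpace ℂ (Fin n),
            (inner (𝕜 := ℂ) (Matrix.toEuclideanLin S u) u).re ≤ -‖u‖ ^ 2) →
        (∀ z ∈ Ici (0:ℝ), ∀ u : EuclideanSpace ℂ (Fin n),
            θ * ‖u‖ ^ 2 ≤
              (inner (𝕜 := ℂ)
                (Matrix.toEuclideanLin
                  ((2⁻¹ : ℂ) • (S * Q z + (S * Q z)ᴴ)) u) u).re) →
        ‖Matrix.toEuclideanCLM (𝕜 := ℂ) S‖ ≤ K →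
        ∀ x ∈ Ici (0:ℝ),
          ‖U x‖ ^ 2 + θ * ∫ z in Ici (0:ℝ), ‖U z‖ ^ 2 ≤
            C * (‖U 0‖ ^ 2 + (∫ z in Ici (0:ℝ), ‖F z‖) ^ 2) :=
  stmt_1_general n K
end

section
/- Let n ≥ 1 and K ≥ 0. Let H : [0,∞) → Mat(n,ℂ) be continuous with operator norm ‖H(x)‖ ≤ K for all x ≥ 0, let F : [0,∞) → ℂⁿ be continuous and integrable, and let U : [0,∞) → ℂⁿ be a bounded, square-integrable C¹ solution of U'(x) = H(x)U(x) + F(x). Then sup_{x≥0} |U(x)|² ≤ 2|U(0)|² + 4K ∫₀^∞ |U(x)|² dx + 4 (∫₀^∞ |F(x)| dx)². -/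
/-!
Differentiating `‖U‖²` along the equation gives `(‖U‖²)' = 2 Re ⟪U' , U⟫ ≤ 2K‖U‖² + 2‖F‖‖U‖`.
Integrating over `[0, x]` and bounding `‖U‖` by `S = sup ‖U‖` in the forcing term yields
`‖U x‖² ≤ ‖U 0‖² + 2K ∫ ‖U‖² + 2S ∫ ‖F‖`; taking the supremum in `x` and absorbing
`2S ∫ ‖F‖ ≤ S²/2 + 2 (∫ ‖F‖)²` into the left-hand side gives the claim.
-/

open MeasureTheory Set Matrix
open scoped InnerProductSpace

theorem HasDerivWithinAt.norm_sq_of_rclike {𝕜 E : Type*} [RCLike 𝕜] [NormedAddCommGroup E]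
    [InnerProductSpace 𝕜 E] [NormedSpace ℝ E] {U : ℝ → E} {U' : E} {s : Set ℝ} {x : ℝ}
    (hU : HasDerivWithinAt U U' s x) :
    HasDerivWithinAt (fun t => ‖U t‖ ^ 2) (2 * RCLike.re ⟪U', U x⟫_𝕜) s x := by
  have h := (RCLike.reCLM (K := 𝕜)).hasFDerivAt.comp_hasDerivWithinAt x (hU.inner 𝕜 hU)
  have hfun : (RCLike.reCLM ∘ fun t => ⟪U t, U t⟫_𝕜) = fun t => ‖U t‖ ^ 2 := by
    funext t
    simp
  have hval : RCLike.reCLM (⟪U x, U'⟫_𝕜 + ⟪U', U x⟫_𝕜) = 2 * RCLike.re ⟪U', U x⟫_𝕜 := by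
    rw [RCLike.reCLM_apply, map_add, ← inner_conj_symm U' (U x), RCLike.conj_re]
    ring
  rwa [hfun, hval] at h

theorem sub_le_setIntegral_Ici_of_hasDerivWithinAt_le {g g' φ : ℝ → ℝ} {a : ℝ}
    (hg : ∀ x ∈ Ici a, HasDerivWithinAt g (g' x) (Ici a) x) (hφ : IntegrableOn φ (Ici a))
    (hφ_nonneg : ∀ x ∈ Ici a, 0 ≤ φ x) (hg'φ : ∀ x ∈ Ici a, g' x ≤ φ x) :
    ∀ b ∈ Ici a, g b - g a ≤ ∫ t in Ici a, φ t := by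
  intro b hb
  have hab : a ≤ b := hb
  have hIcc : Icc a b ⊆ Ici a := Icc_subset_Ici_self
  calc g b - g a ≤ ∫ t in a..b, φ t := by
        refine intervalIntegral.sub_le_integral_of_hasDeriv_right_of_le hab
          (fun x hx => (hg x (hIcc hx)).continuousWithinAt.mono hIcc) (fun x hx => ?_)
          (hφ.mono_set hIcc) (fun x hx => hg'φ x (hIcc (Ioo_subset_Icc_self hx)))
        exact (hg x (hIcc (Ioo_subset_Icc_self hx))).mono (Ioi_subset_Ici hx.1.le)
    _ = ∫ t in Ioc a b, φ t := intervalIntegral.integral_of_le hab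
    _ ≤ ∫ t in Ici a, φ t :=
        setIntegral_mono_set hφ (ae_restrict_of_forall_mem measurableSet_Ici hφ_nonneg)
          (Ioc_subset_Ioi_self.trans Ioi_subset_Ici_self).eventuallyLE

theorem norm_sq_sub_norm_sq_le_of_norm_deriv_le (𝕜 : Type*) {E : Type*} [RCLike 𝕜]
    [NormedAddCommGroup E] [InnerProductSpace 𝕜 E] [NormedSpace ℝ E] {U U' : ℝ → E}
    {f : ℝ → ℝ} {K S a : ℝ}
    (hU : ∀ x ∈ Ici a, HasDerivWithinAt U (U' x) (Ici a) x)
    (hU' : ∀ x ∈ Ici a, ‖U' x‖ ≤ K * ‖U x‖ + f x) (hS : ∀ x ∈ Ici a, ‖U x‖ ≤ S)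
    (hK : 0 ≤ K) (hf : ∀ x ∈ Ici a, 0 ≤ f x)
    (hUL2 : IntegrableOn (fun x => ‖U x‖ ^ 2) (Ici a)) (hf_int : IntegrableOn f (Ici a)) :
    ∀ x ∈ Ici a, ‖U x‖ ^ 2 - ‖U a‖ ^ 2
      ≤ 2 * K * (∫ t in Ici a, ‖U t‖ ^ 2) + 2 * S * ∫ t in Ici a, f t := by
  have hderiv_le : ∀ x ∈ Ici a,
      2 * RCLike.re ⟪U' x, U x⟫_𝕜 ≤ 2 * K * ‖U x‖ ^ 2 + 2 * S * f x := by
    intro x hx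
    have h_inner := re_inner_le_norm (𝕜 := 𝕜) (U' x) (U x)
    have h_mul := mul_le_mul_of_nonneg_right (hU' x hx) (norm_nonneg (U x))
    nlinarith [mul_le_mul_of_nonneg_left (hS x hx) (hf x hx)]
  have h := sub_le_setIntegral_Ici_of_hasDerivWithinAt_le
    (φ := fun t => 2 * K * ‖U t‖ ^ 2 + 2 * S * f t)
    (fun x hx => HasDerivWithinAt.norm_sq_of_rclike (𝕜 := 𝕜) (hU x hx))
    ((hUL2.const_mul (2 * K)).fun_add (hf_int.const_mul (2 * S)))
    (fun x hx => by
      have := (norm_nonneg (U x)).trans (hS x hx)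
      have := hf x hx
      positivity)
    hderiv_le
  rwa [integral_add (hUL2.const_mul _) (hf_int.const_mul _), integral_const_mul,
    integral_const_mul] at h

theorem sq_le_of_sq_le_add_mul_sSup {α : Type*} {s : Set α} {u : α → ℝ} {A B : ℝ}
    (hs : s.Nonempty) (hbdd : BddAbove (u '' s)) (hu : ∀ x ∈ s, 0 ≤ u x)
    (h : ∀ x ∈ s, u x ^ 2 ≤ A + 2 * sSup (u '' s) * B) :
    ∀ x ∈ s, u x ^ 2 ≤ 2 * A + 4 * B ^ 2 := by
  set S := sSup (u '' s)
  obtain ⟨x₀, hx₀⟩ := hs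
  have hle_S : ∀ x ∈ s, u x ≤ S := fun x hx => le_csSup hbdd (mem_image_of_mem u hx)
  have hS_nonneg : 0 ≤ S := (hu x₀ hx₀).trans (hle_S x₀ hx₀)
  have hS_sq : S ^ 2 ≤ A + 2 * S * B := by
    refine (Real.le_sqrt hS_nonneg ((sq_nonneg _).trans (h x₀ hx₀))).1 ?_
    exact csSup_le (Set.Nonempty.image u ⟨x₀, hx₀⟩)
      (forall_mem_image.2 fun x hx => Real.le_sqrt_of_sq_le (h x hx))
  intro x hx
  have := pow_le_pow_left₀ (hu x hx) (hle_S x hx) 2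
  nlinarith [sq_nonneg (S - 2 * B)]

theorem stmt_2_general (n : ℕ) (K : ℝ)
    (H : ℝ → Matrix (Fin n) (Fin n) ℂ)
    (F U : ℝ → EuclideanSpace ℂ (Fin n))
    (hHbound : ∀ x ∈ Ici (0:ℝ), ‖Matrix.toEuclideanCLM (𝕜 := ℂ) (H x)‖ ≤ K)
    (hFint : IntegrableOn (fun x => ‖F x‖) (Ici 0))
    (hUbdd : ∃ M : ℝ, ∀ x ∈ Ici (0:ℝ), ‖U x‖ ≤ M)
    (hUL2 : IntegrableOn (fun x => ‖U x‖ ^ 2) (Ici 0))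
    (hODE : ∀ x ∈ Ici (0:ℝ), HasDerivWithinAt U
        (Matrix.toEuclideanLin (H x) (U x) + F x) (Ici 0) x) :
    ∀ x ∈ Ici (0:ℝ),
      ‖U x‖ ^ 2 ≤ 2 * ‖U 0‖ ^ 2 + 4 * K * (∫ z in Ici (0:ℝ), ‖U z‖ ^ 2)
        + 4 * (∫ z in Ici (0:ℝ), ‖F z‖) ^ 2 := by
  obtain ⟨M, hM⟩ := hUbdd
  have hbdd : BddAbove ((‖U ·‖) '' Ici 0) := ⟨M, forall_mem_image.2 hM⟩
  have hK : 0 ≤ K := (norm_nonneg _).trans (hHbound 0 self_mem_Ici)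
  have hrhs : ∀ x ∈ Ici (0:ℝ),
      ‖Matrix.toEuclideanLin (H x) (U x) + F x‖ ≤ K * ‖U x‖ + ‖F x‖ := fun x hx =>
    (norm_add_le _ _).trans <| add_le_add_left
      (((Matrix.toEuclideanCLM (𝕜 := ℂ) (H x)).le_opNorm (U x)).trans
        (mul_le_mul_of_nonneg_right (hHbound x hx) (norm_nonneg _))) _
  have henergy := norm_sq_sub_norm_sq_le_of_norm_deriv_le ℂ hODE hrhs
    (fun x hx => le_csSup hbdd (mem_image_of_mem _ hx)) hK (fun _ _ => norm_nonneg _) hUL2 hFint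
  have habsorb := sq_le_of_sq_le_add_mul_sSup
    (A := ‖U 0‖ ^ 2 + 2 * K * ∫ z in Ici (0:ℝ), ‖U z‖ ^ 2) (B := ∫ z in Ici (0:ℝ), ‖F z‖)
    nonempty_Ici hbdd (fun _ _ => norm_nonneg _) (fun x hx => by linarith [henergy x hx])
  intro x hx
  linarith [habsorb x hx]

/-- The key pointwise estimate (2.19) of the paper: for a bounded, square-integrable C¹
solution of `U' = H U + F` on `[0,∞)` with `‖H(x)‖ ≤ K` (operator norm),
`sup |U|² ≤ 2|U(0)|² + 4K ∫ |U|² + 4 (∫ |F|)²`. -/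
theorem stmt_2 (n : ℕ) (hn : 1 ≤ n) (K : ℝ) (hK : 0 ≤ K)
    (H : ℝ → Matrix (Fin n) (Fin n) ℂ)
    (F U : ℝ → EuclideanSpace ℂ (Fin n))
    (hHcont : ContinuousOn H (Ici 0))
    (hHbound : ∀ x ∈ Ici (0:ℝ), ‖Matrix.toEuclideanCLM (𝕜 := ℂ) (H x)‖ ≤ K)
    (hFcont : ContinuousOn F (Ici 0))
    (hFint : IntegrableOn (fun x => ‖F x‖) (Ici 0))
    (hUbdd : ∃ M : ℝ, ∀ x ∈ Ici (0:ℝ), ‖U x‖ ≤ M)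
    (hUL2 : IntegrableOn (fun x => ‖U x‖ ^ 2) (Ici 0))
    (hODE : ∀ x ∈ Ici (0:ℝ), HasDerivWithinAt U
        (Matrix.toEuclideanLin (H x) (U x) + F x) (Ici 0) x) :
    ∀ x ∈ Ici (0:ℝ),
      ‖U x‖ ^ 2 ≤ 2 * ‖U 0‖ ^ 2 + 4 * K * (∫ z in Ici (0:ℝ), ‖U z‖ ^ 2)
        + 4 * (∫ z in Ici (0:ℝ), ‖F z‖) ^ 2 :=
  stmt_2_general n K H F U hHbound hFint hUbdd hUL2 hODE
end

section
/- Let d ≥ 3 be an integer and θ, r > 0. Then there exists a constant C > 0 such that for all t > 0, ∫_{{ξ ∈ ℝ^{d−1} : |ξ| ≤ r}} ( ∫_{−r}^{r} e^{−θ(k² + |ξ|²) t} (k² + |ξ|²)^{−3/4} dk )² dξ ≤ C (1 + t)^{−(d−2)/2}. -/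
/-!
Fix `ξ ≠ 0` and `ρ = ‖ξ‖`. Bounding `e^{-θ(k²+ρ²)t} ≤ e^{-θρ²t}` and scaling `k = ρu` in
`∫_ℝ (k²+ρ²)^{-3/4} dk` bounds the inner integral by `K ρ^{-1/2} e^{-θρ²t}`, where
`K = ∫_ℝ (1+u²)^{-3/4} du < ∞`. Its square is thus at most `K² ρ^{-1} e^{-2θtρ²}`, and on the ball
`ρ ≤ r` at most `K² e^{2θr²} ρ^{-1} e^{-2θ(1+t)ρ²}`. In polar coordinates in dimension `n ≥ 2`,
`∫ ‖ξ‖^{-1} e^{-b‖ξ‖²} dξ` is a constant times `∫_0^∞ y^{n-2} e^{-by²} dy ∝ b^{-(n-1)/2}`; with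
`n = d - 1` and `b = 2θ(1+t)` this is the claimed rate `(1+t)^{-(d-2)/2}`.
-/

open Real Set MeasureTheory Module

section RadialGaussian

variable {E : Type*} [NormedAddCommGroup E] [NormedSpace ℝ E] [Nontrivial E]
  [FiniteDimensional ℝ E] [MeasurableSpace E] [BorelSpace E]
  (μ : Measure E) [μ.IsAddHaarMeasure]

lemma pow_pred_smul_rpow_neg_mul_exp {n : ℕ} (hn : 1 ≤ n) (s b : ℝ) {y : ℝ} (hy : 0 < y) :
    y ^ (n - 1) • (y ^ (-s) * exp (-b * y ^ 2)) =
      y ^ ((n : ℝ) - 1 - s) * exp (-b * y ^ (2 : ℝ)) := by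
  rw [smul_eq_mul, ← mul_assoc, ← rpow_natCast, ← rpow_add hy, Nat.cast_sub hn, rpow_two]
  ring_nf

lemma integrable_norm_rpow_neg_mul_exp_neg_mul_sq {s b : ℝ} (hs : s < finrank ℝ E) (hb : 0 < b) :
    Integrable (fun x => ‖x‖ ^ (-s) * exp (-b * ‖x‖ ^ 2)) μ := by
  rw [integrable_fun_norm_addHaar μ (f := fun y => y ^ (-s) * exp (-b * y ^ 2))]
  refine (integrableOn_rpow_mul_exp_neg_mul_sq hb (s := finrank ℝ E - 1 - s)
    (by linarith)).congr_fun (fun y hy => ?_) measurableSet_Ioi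
  rw [pow_pred_smul_rpow_neg_mul_exp finrank_pos _ _ hy, rpow_two]

lemma integral_norm_rpow_neg_mul_exp_neg_mul_sq {s b : ℝ} (hs : s < finrank ℝ E) (hb : 0 < b) :
    ∫ x, ‖x‖ ^ (-s) * exp (-b * ‖x‖ ^ 2) ∂μ =
      finrank ℝ E * μ.real (Metric.ball 0 1) * (Gamma ((finrank ℝ E - s) / 2) / 2) *
        b ^ (-((finrank ℝ E - s) / 2)) := by
  rw [integral_fun_norm_addHaar μ (fun y => y ^ (-s) * exp (-b * y ^ 2)),
    setIntegral_congr_fun measurableSet_Ioi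
      (fun y hy => pow_pred_smul_rpow_neg_mul_exp finrank_pos s b hy),
    integral_rpow_mul_exp_neg_mul_rpow two_pos (by linarith) hb, nsmul_eq_mul, smul_eq_mul]
  ring_nf

end RadialGaussian

section OneDimensional

variable {s a : ℝ}

lemma sq_add_rpow_neg_eq (ha : 0 < a) (k : ℝ) :
    (k ^ 2 + a) ^ (-s) = a ^ (-s) * (1 + (k / √a) ^ 2) ^ (-s) := by
  rw [← mul_rpow ha.le (by positivity), div_pow, sq_sqrt ha.le]
  field_simp
  ring_nf

lemma integrable_one_add_sq_rpow_neg (hs : 1 / 2 < s) :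
    Integrable fun u : ℝ => (1 + u ^ 2) ^ (-s) := by
  have h : Integrable fun u : ℝ => (1 + ‖u‖ ^ 2) ^ (-(2 * s) / 2) :=
    integrable_rpow_neg_one_add_norm_sq (by simp; linarith)
  simpa only [norm_eq_abs, sq_abs, neg_div, mul_div_cancel_left₀ s two_ne_zero] using h

lemma integral_one_add_sq_rpow_neg_pos (hs : 1 / 2 < s) :
    0 < ∫ u : ℝ, (1 + u ^ 2) ^ (-s) :=
  integral_pos_of_integrable_nonneg_nonzero (x := 0)
    ((continuous_const.add (continuous_pow 2)).rpow_const fun u =>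
      Or.inl (by positivity : (0 : ℝ) < 1 + u ^ 2).ne')
    (integrable_one_add_sq_rpow_neg hs) (fun u => by positivity) (by norm_num)

lemma integrable_sq_add_rpow_neg (hs : 1 / 2 < s) (ha : 0 < a) :
    Integrable fun k : ℝ => (k ^ 2 + a) ^ (-s) := by
  simpa only [sq_add_rpow_neg_eq ha] using
    ((integrable_one_add_sq_rpow_neg hs).comp_div (sqrt_pos.2 ha).ne').const_mul (a ^ (-s))

lemma integral_sq_add_rpow_neg (ha : 0 < a) :
    ∫ k : ℝ, (k ^ 2 + a) ^ (-s) = a ^ (1 / 2 - s) * ∫ u : ℝ, (1 + u ^ 2) ^ (-s) := by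
  simp_rw [sq_add_rpow_neg_eq ha]
  rw [integral_const_mul, Measure.integral_comp_div (fun u => (1 + u ^ 2) ^ (-s)),
    abs_of_pos (sqrt_pos.2 ha), smul_eq_mul, ← mul_assoc, sqrt_eq_rpow, ← rpow_add ha]
  ring_nf

lemma integral_exp_mul_sq_add_rpow_neg_le {θ t r : ℝ} (hθ : 0 ≤ θ) (ht : 0 ≤ t) (hr : 0 ≤ r)
    (hs : 1 / 2 < s) (ha : 0 < a) :
    ∫ k in (-r)..r, exp (-θ * (k ^ 2 + a) * t) * (k ^ 2 + a) ^ (-s) ≤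
      exp (-θ * a * t) * (a ^ (1 / 2 - s) * ∫ u : ℝ, (1 + u ^ 2) ^ (-s)) := by
  have hexp : ∀ k : ℝ, exp (-θ * (k ^ 2 + a) * t) ≤ exp (-θ * a * t) := fun k =>
    exp_le_exp.2 (by nlinarith [mul_nonneg (mul_nonneg hθ (sq_nonneg k)) ht])
  have hmajorant := (integrable_sq_add_rpow_neg hs ha).const_mul (exp (-θ * a * t))
  have hint : Integrable fun k : ℝ => exp (-θ * (k ^ 2 + a) * t) * (k ^ 2 + a) ^ (-s) := by
    refine hmajorant.mono' (by fun_prop) (.of_forall fun k => ?_)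
    rw [norm_of_nonneg (by positivity)]
    exact mul_le_mul_of_nonneg_right (hexp k) (by positivity)
  calc ∫ k in (-r)..r, exp (-θ * (k ^ 2 + a) * t) * (k ^ 2 + a) ^ (-s)
      ≤ ∫ k, exp (-θ * (k ^ 2 + a) * t) * (k ^ 2 + a) ^ (-s) := by
        rw [intervalIntegral.integral_of_le (by linarith)]
        exact setIntegral_le_integral hint (.of_forall fun k => by positivity)
    _ ≤ ∫ k, exp (-θ * a * t) * (k ^ 2 + a) ^ (-s) :=
        integral_mono hint hmajorant fun k =>
          mul_le_mul_of_nonneg_right (hexp k) (by positivity)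
    _ = _ := by rw [integral_const_mul, integral_sq_add_rpow_neg ha]

end OneDimensional

/- The factor `exp (2θr²)` turns the decay `exp (-2θtρ²)` into `exp (-2θ(1+t)ρ²)` on `ρ ≤ r`,
so that one majorant serves for small and large `t` alike. -/
lemma sq_integral_exp_mul_sq_add_rpow_le {θ t r ρ : ℝ} (hθ : 0 ≤ θ) (ht : 0 ≤ t) (hρ : 0 < ρ)
    (hρr : ρ ≤ r) :
    (∫ k in (-r)..r, exp (-θ * (k ^ 2 + ρ ^ 2) * t) * (k ^ 2 + ρ ^ 2) ^ (-(3 / 4 : ℝ))) ^ 2 ≤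
      (∫ u : ℝ, (1 + u ^ 2) ^ (-(3 / 4 : ℝ))) ^ 2 * exp (2 * θ * r ^ 2) *
        (ρ ^ (-1 : ℝ) * exp (-(2 * θ * (1 + t)) * ρ ^ 2)) := by
  set K := ∫ u : ℝ, (1 + u ^ 2) ^ (-(3 / 4 : ℝ))
  have hr : 0 ≤ r := hρ.le.trans hρr
  have hinner := integral_exp_mul_sq_add_rpow_neg_le hθ ht hr (s := 3 / 4) (by norm_num)
    (pow_pos hρ 2)
  have hpow : ((ρ ^ 2) ^ (1 / 2 - 3 / 4 : ℝ)) ^ 2 = ρ ^ (-1 : ℝ) := by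
    rw [← rpow_natCast, ← rpow_mul (by positivity), ← rpow_natCast ρ 2, ← rpow_mul hρ.le]
    norm_num
  have hexp : exp (-θ * ρ ^ 2 * t) ^ 2 =
      exp (2 * θ * ρ ^ 2) * exp (-(2 * θ * (1 + t)) * ρ ^ 2) := by
    rw [sq, ← exp_add, ← exp_add]
    ring_nf
  calc _ ≤ (exp (-θ * ρ ^ 2 * t) * ((ρ ^ 2) ^ (1 / 2 - 3 / 4 : ℝ) * K)) ^ 2 :=
        pow_le_pow_left₀ (intervalIntegral.integral_nonneg (by linarith)
          fun _ _ => by positivity) hinner 2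
    _ = K ^ 2 * exp (2 * θ * ρ ^ 2) * (ρ ^ (-1 : ℝ) * exp (-(2 * θ * (1 + t)) * ρ ^ 2)) := by
        rw [mul_pow, mul_pow, hpow, hexp]
        ring
    _ ≤ _ := by gcongr

theorem exists_setIntegral_sq_integral_exp_mul_sq_add_rpow_le {E : Type*}
    [NormedAddCommGroup E] [NormedSpace ℝ E] [FiniteDimensional ℝ E] [MeasurableSpace E]
    [BorelSpace E] (μ : Measure E) [μ.IsAddHaarMeasure] (hE : 1 < finrank ℝ E) {θ : ℝ}
    (hθ : 0 < θ) (r : ℝ) :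
    ∃ C : ℝ, 0 < C ∧ ∀ t : ℝ, 0 < t →
      ∫ ξ in {ξ : E | ‖ξ‖ ≤ r},
          (∫ k in (-r)..r, exp (-θ * (k ^ 2 + ‖ξ‖ ^ 2) * t) *
            (k ^ 2 + ‖ξ‖ ^ 2) ^ (-(3 / 4 : ℝ))) ^ 2 ∂μ ≤
        C * (1 + t) ^ (-(((finrank ℝ E : ℝ) - 1) / 2)) := by
  have : Nontrivial E := nontrivial_of_finrank_pos (zero_lt_one.trans hE)
  have hs : (1 : ℝ) < finrank ℝ E := by exact_mod_cast hE
  set K := ∫ u : ℝ, (1 + u ^ 2) ^ (-(3 / 4 : ℝ))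
  have hK : 0 < K := integral_one_add_sq_rpow_neg_pos (by norm_num)
  have hball : 0 < μ.real (Metric.ball 0 1) :=
    ENNReal.toReal_pos (Metric.measure_ball_pos μ 0 one_pos).ne' measure_ball_lt_top.ne
  have hΓ : 0 < Gamma (((finrank ℝ E : ℝ) - 1) / 2) := Gamma_pos_of_pos (by linarith)
  refine ⟨K ^ 2 * exp (2 * θ * r ^ 2) *
    (finrank ℝ E * μ.real (Metric.ball 0 1) * (Gamma (((finrank ℝ E : ℝ) - 1) / 2) / 2)) *
      (2 * θ) ^ (-(((finrank ℝ E : ℝ) - 1) / 2)), by positivity, fun t ht => ?_⟩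
  have hM := (integrable_norm_rpow_neg_mul_exp_neg_mul_sq μ hs
    (show 0 < 2 * θ * (1 + t) by positivity)).const_mul (K ^ 2 * exp (2 * θ * r ^ 2))
  have hS : MeasurableSet {ξ : E | ‖ξ‖ ≤ r} := measurableSet_le measurable_norm measurable_const
  calc _ ≤ ∫ ξ in {ξ : E | ‖ξ‖ ≤ r}, K ^ 2 * exp (2 * θ * r ^ 2) *
            (‖ξ‖ ^ (-1 : ℝ) * exp (-(2 * θ * (1 + t)) * ‖ξ‖ ^ 2)) ∂μ := by
        refine integral_mono_of_nonneg (.of_forall fun _ => sq_nonneg _) hM.restrict ?_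
        filter_upwards [ae_restrict_mem hS, ae_restrict_of_ae (Measure.ae_ne μ 0)]
          with ξ hξr hξ0
        exact sq_integral_exp_mul_sq_add_rpow_le hθ.le ht.le (norm_pos_iff.2 hξ0) hξr
    _ ≤ ∫ ξ, K ^ 2 * exp (2 * θ * r ^ 2) *
            (‖ξ‖ ^ (-1 : ℝ) * exp (-(2 * θ * (1 + t)) * ‖ξ‖ ^ 2)) ∂μ :=
        setIntegral_le_integral hM (.of_forall fun _ => by positivity)
    _ = _ := by
        rw [integral_const_mul, integral_norm_rpow_neg_mul_exp_neg_mul_sq μ hs (by positivity),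
          mul_rpow (by positivity) (by positivity)]
        ring

theorem stmt_6_general (d : ℕ) (hd : 3 ≤ d) (θ r : ℝ) (hθ : 0 < θ) :
    ∃ C : ℝ, 0 < C ∧ ∀ t : ℝ, 0 < t →
      (∫ ξ in {ξ : EuclideanSpace ℝ (Fin (d - 1)) | ‖ξ‖ ≤ r},
          (∫ k in (-r)..r,
            Real.exp (-θ * (k ^ 2 + ‖ξ‖ ^ 2) * t) *
              (k ^ 2 + ‖ξ‖ ^ 2) ^ (-(3 / 4 : ℝ))) ^ 2) ≤
        C * (1 + t) ^ (-(((d : ℝ) - 2) / 2)) := by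
  obtain ⟨C, hC, hbound⟩ := exists_setIntegral_sq_integral_exp_mul_sq_add_rpow_le
    (volume : Measure (EuclideanSpace ℝ (Fin (d - 1))))
    (by rw [finrank_euclideanSpace_fin]; omega) hθ r
  have hdim : ((d - 1 : ℕ) : ℝ) - 1 = d - 2 := by
    rw [Nat.cast_sub (by omega)]
    ring
  rw [finrank_euclideanSpace_fin, hdim] at hbound
  exact ⟨C, hC, hbound⟩

/-- Frequency-space integral estimate behind the L² bound on the low-frequency solution
operator `S₁(t)` (Proposition 2.1): for `d ≥ 3`, `θ, r > 0`, there is `C > 0` such that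
`∫_{|ξ| ≤ r} (∫_{-r}^r e^{-θ(k²+|ξ|²)t} (k²+|ξ|²)^{-3/4} dk)² dξ ≤ C (1+t)^{-(d-2)/2}`. -/
theorem stmt_6 (d : ℕ) (hd : 3 ≤ d) (θ r : ℝ) (hθ : 0 < θ) (hr : 0 < r) :
    ∃ C : ℝ, 0 < C ∧ ∀ t : ℝ, 0 < t →
      (∫ ξ in {ξ : EuclideanSpace ℝ (Fin (d - 1)) | ‖ξ‖ ≤ r},
          (∫ k in (-r)..r,
            Real.exp (-θ * (k ^ 2 + ‖ξ‖ ^ 2) * t) *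
              (k ^ 2 + ‖ξ‖ ^ 2) ^ (-(3 / 4 : ℝ))) ^ 2) ≤
        C * (1 + t) ^ (-(((d : ℝ) - 2) / 2)) :=
  stmt_6_general d hd θ r hθ
end

section
/- Let θ > 0 and C₀ > 0. There exists a constant C > 0, depending only on θ and C₀, such that for every ρ ∈ (0,1], every measurable kernel K : ℝ × ℝ → ℂ satisfying |K(x,y)| ≤ C₀ ( ρ^{−1} e^{−θ|x|} ( ρ e^{−θρ|y|} + e^{−θ|y|} ) + e^{−ρ|x−y|} ( ρ + e^{−θ|y|} ) ) for almost every (x,y), and every f ∈ L¹(ℝ), the function V(x) := ∫_ℝ K(x,y) f(y) dy satisfies ‖V‖_{L^p(ℝ)} ≤ C ρ^{−1} ‖f‖_{L¹(ℝ)} for every p ∈ [1,∞]. -/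
open MeasureTheory Real
open scoped ENNReal Convolution

/-! Since `ρ ≤ 1` and all the exponentials are at most `1`, the kernel is dominated by
`2C₀(ρ⁻¹e^{-θ|x|} + e^{-ρ|x-y|})`, so `|V|` is dominated by
`W = 2C₀ρ⁻¹e^{-θ|·|}‖f‖₁ + 2C₀(|f| ⋆ e^{-ρ|·|})`. This `W` is bounded by `4C₀ρ⁻¹‖f‖₁` and has
integral `4C₀ρ⁻¹(θ⁻¹ + 1)‖f‖₁`, and a function in `L¹ ∩ L^∞` is controlled in every `L^p`,
`1 ≤ p ≤ ∞`, because `∫ |W|^p ≤ ‖W‖_∞^{p-1} ‖W‖₁`. -/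

theorem eLpNorm_le_max_eLpNorm_one_eLpNorm_top {α E : Type*} [MeasurableSpace α]
    {μ : Measure α} [NormedAddCommGroup E] (f : α → E) {p : ℝ≥0∞} (hp : 1 ≤ p) :
    eLpNorm f p μ ≤ max (eLpNorm f 1 μ) (eLpNorm f ∞ μ) := by
  set B := max (eLpNorm f 1 μ) (eLpNorm f ∞ μ)
  rcases eq_or_ne B ∞ with hB | hB
  · simp [hB]
  rcases eq_or_ne p ∞ with rfl | hp_top
  · exact le_max_right _ _
  set q := p.toReal
  have hq : 1 ≤ q := by simpa using ENNReal.toReal_mono hp_top hp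
  have hsup : ∀ᵐ x ∂μ, ‖f x‖ₑ ≤ B := (enorm_ae_le_eLpNormEssSup f μ).mono fun x hx =>
    hx.trans (eLpNorm_exponent_top (f := f) ▸ le_max_right _ _)
  have hint : ∫⁻ x, ‖f x‖ₑ ∂μ ≤ B := eLpNorm_one_eq_lintegral_enorm (f := f) ▸ le_max_left _ _
  have rpow_split (x : ℝ≥0∞) : x ^ q = x ^ (q - 1) * x := by
    conv_lhs => rw [← sub_add_cancel q 1]
    rw [ENNReal.rpow_add_of_nonneg _ _ (by linarith) zero_le_one, ENNReal.rpow_one]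
  rw [eLpNorm_eq_lintegral_rpow_enorm_toReal (by positivity) hp_top, one_div,
    ENNReal.rpow_inv_le_iff (by positivity)]
  calc ∫⁻ x, ‖f x‖ₑ ^ q ∂μ ≤ ∫⁻ x, B ^ (q - 1) * ‖f x‖ₑ ∂μ := by
        refine lintegral_mono_ae (hsup.mono fun x hx => ?_)
        rw [rpow_split]
        gcongr
    _ = B ^ (q - 1) * ∫⁻ x, ‖f x‖ₑ ∂μ :=
        lintegral_const_mul' _ _ (ENNReal.rpow_ne_top_of_nonneg (by linarith) hB)
    _ ≤ B ^ (q - 1) * B := by gcongr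
    _ = B ^ q := (rpow_split B).symm

theorem exp_neg_mul_abs_le_one {b : ℝ} (hb : 0 ≤ b) (x : ℝ) : exp (-b * |x|) ≤ 1 :=
  exp_le_one_iff.mpr (by nlinarith [abs_nonneg x])

theorem integral_exp_neg_mul_abs {b : ℝ} (hb : 0 < b) : ∫ x, exp (-b * |x|) = 2 / b := by
  rw [integral_comp_abs (f := fun x => exp (-b * x)), integral_exp_mul_Ioi (by linarith)]
  simp only [mul_zero, exp_zero]
  field_simp

theorem integrable_exp_neg_mul_abs {b : ℝ} (hb : 0 < b) : Integrable fun x => exp (-b * |x|) :=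
  Integrable.of_integral_ne_zero (by rw [integral_exp_neg_mul_abs hb]; positivity)

section KernelOperator

variable {f : ℝ → ℂ} {φ ψ : ℝ → ℝ}

theorem integrable_norm_mul_comp_sub (hf : Integrable f) (hψ : Integrable ψ) (hψ0 : 0 ≤ ψ)
    {M : ℝ} (hψM : ∀ z, ψ z ≤ M) (x : ℝ) : Integrable fun t => ‖f t‖ * ψ (x - t) :=
  hf.norm.mul_bdd (hψ.comp_sub_left x).aestronglyMeasurable <| ae_of_all _ fun t => by
    rw [Real.norm_of_nonneg (hψ0 _)]
    exact hψM _

theorem convolution_norm_le (hf : Integrable f) (hψ : Integrable ψ) (hψ0 : 0 ≤ ψ) {M : ℝ}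
    (hψM : ∀ z, ψ z ≤ M) (x : ℝ) :
    ((fun y => ‖f y‖) ⋆ ψ) x ≤ M * ∫ y, ‖f y‖ := by
  rw [convolution_lsmul, ← integral_const_mul]
  simp only [smul_eq_mul]
  refine integral_mono (integrable_norm_mul_comp_sub hf hψ hψ0 hψM x) (hf.norm.const_mul M)
    fun t => ?_
  rw [mul_comm M]
  exact mul_le_mul_of_nonneg_left (hψM _) (norm_nonneg _)

theorem norm_integral_mul_le_convolution (hf : Integrable f) (hψ : Integrable ψ) (hψ0 : 0 ≤ ψ)
    {M : ℝ} (hψM : ∀ z, ψ z ≤ M) {k : ℝ → ℂ} {a x : ℝ} (hk : ∀ᵐ y, ‖k y‖ ≤ a + ψ (x - y)) :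
    ‖∫ y, k y * f y‖ ≤ a * (∫ y, ‖f y‖) + ((fun y => ‖f y‖) ⋆ ψ) x := by
  have hconv := integrable_norm_mul_comp_sub hf hψ hψ0 hψM x
  calc ‖∫ y, k y * f y‖ ≤ ∫ y, ‖k y * f y‖ := norm_integral_le_integral_norm _
    _ ≤ ∫ y, (a * ‖f y‖ + ‖f y‖ * ψ (x - y)) := by
        refine integral_mono_of_nonneg (ae_of_all _ fun y => norm_nonneg _)
          ((hf.norm.const_mul a).add hconv) (hk.mono fun y hy => ?_)
        simp only [norm_mul]
        linarith [mul_le_mul_of_nonneg_right hy (norm_nonneg (f y))]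
    _ = a * (∫ y, ‖f y‖) + ((fun y => ‖f y‖) ⋆ ψ) x := by
        rw [integral_add (hf.norm.const_mul a) hconv, integral_const_mul, convolution_lsmul]
        simp only [smul_eq_mul]

theorem eLpNorm_integral_mul_le (hf : Integrable f) (hφ : Integrable φ) (hψ : Integrable ψ)
    (hφ0 : 0 ≤ φ) (hψ0 : 0 ≤ ψ) {Mφ Mψ : ℝ} (hφM : ∀ x, φ x ≤ Mφ) (hψM : ∀ z, ψ z ≤ Mψ)
    {K : ℝ → ℝ → ℂ} (hK : ∀ᵐ x, ∀ᵐ y, ‖K x y‖ ≤ φ x + ψ (x - y)) {p : ℝ≥0∞} (hp : 1 ≤ p) :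
    eLpNorm (fun x => ∫ y, K x y * f y) p volume ≤
      ENNReal.ofReal (max ((∫ x, φ x) + ∫ z, ψ z) (Mφ + Mψ) * ∫ y, ‖f y‖) := by
  set A := ∫ y, ‖f y‖
  set W : ℝ → ℝ := fun x => φ x * A + ((fun y => ‖f y‖) ⋆ ψ) x
  have hA : 0 ≤ A := integral_nonneg fun y => norm_nonneg _
  have hW0 (x : ℝ) : 0 ≤ W x :=
    add_nonneg (mul_nonneg (hφ0 x) hA)
      (integral_nonneg fun t => mul_nonneg (norm_nonneg _) (hψ0 _))
  have hVW : ∀ᵐ x, ‖∫ y, K x y * f y‖ ≤ W x :=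
    hK.mono fun x hx => norm_integral_mul_le_convolution hf hψ hψ0 hψM hx
  have hW_one : eLpNorm W 1 volume = ENNReal.ofReal (((∫ x, φ x) + ∫ z, ψ z) * A) := by
    have hconv := hf.norm.integrable_convolution (ContinuousLinearMap.lsmul ℝ ℝ) hψ
    have hW_int : Integrable W := (hφ.mul_const A).add hconv
    rw [eLpNorm_one_eq_lintegral_enorm]
    simp_rw [Real.enorm_of_nonneg (hW0 _)]
    rw [← ofReal_integral_eq_lintegral_ofReal hW_int (ae_of_all _ hW0),
      integral_add (hφ.mul_const A) hconv, integral_mul_const,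
      integral_convolution (ContinuousLinearMap.lsmul ℝ ℝ) hf.norm hψ]
    simp only [ContinuousLinearMap.lsmul_apply, smul_eq_mul, A]
    congr 1
    ring
  have hW_top : eLpNorm W ∞ volume ≤ ENNReal.ofReal ((Mφ + Mψ) * A) := by
    rw [eLpNorm_exponent_top]
    refine eLpNormEssSup_le_of_ae_bound (ae_of_all _ fun x => ?_)
    rw [Real.norm_of_nonneg (hW0 x), add_mul]
    exact add_le_add (mul_le_mul_of_nonneg_right (hφM x) hA)
      (convolution_norm_le hf hψ hψ0 hψM x)
  calc eLpNorm (fun x => ∫ y, K x y * f y) p volume ≤ eLpNorm W p volume :=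
        eLpNorm_mono_ae_real hVW
    _ ≤ max (eLpNorm W 1 volume) (eLpNorm W ∞ volume) :=
        eLpNorm_le_max_eLpNorm_one_eLpNorm_top W hp
    _ ≤ _ := by
        rw [hW_one, max_mul_of_nonneg _ _ hA, ENNReal.ofReal_max]
        gcongr

end KernelOperator

theorem kernel_majorant_le {θ ρ : ℝ} (hθ : 0 ≤ θ) (hρ : ρ ∈ Set.Ioc (0 : ℝ) 1) (x y : ℝ) :
    ρ⁻¹ * exp (-θ * |x|) * (ρ * exp (-θ * ρ * |y|) + exp (-θ * |y|))
        + exp (-ρ * |x - y|) * (ρ + exp (-θ * |y|))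
      ≤ 2 * ρ⁻¹ * exp (-θ * |x|) + 2 * exp (-ρ * |x - y|) := by
  obtain ⟨hρ0, hρ1⟩ := hρ
  have hθρ : exp (-θ * ρ * |y|) ≤ 1 := by
    simpa only [neg_mul] using exp_neg_mul_abs_le_one (mul_nonneg hθ hρ0.le) y
  have hθy := exp_neg_mul_abs_le_one hθ y
  have h₁ : ρ * exp (-θ * ρ * |y|) + exp (-θ * |y|) ≤ 2 := by
    nlinarith [exp_pos (-θ * ρ * |y|)]
  have h₂ : ρ + exp (-θ * |y|) ≤ 2 := by linarith
  calc _ ≤ ρ⁻¹ * exp (-θ * |x|) * 2 + exp (-ρ * |x - y|) * 2 := by gcongr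
    _ = _ := by ring

/-- Kernel-to-operator bound underlying estimate (2.29), undercompressive case (α = 1):
a kernel dominated by `C₀(ρ⁻¹e^{-θ|x|}(ρe^{-θρ|y|} + e^{-θ|y|}) + e^{-ρ|x-y|}(ρ + e^{-θ|y|}))`
maps `L¹(ℝ)` into `L^p(ℝ)` with operator norm at most `C ρ⁻¹`, for every `p ∈ [1,∞]`. -/
theorem stmt_9 (θ C₀ : ℝ) (hθ : 0 < θ) (hC₀ : 0 < C₀) :
    ∃ C : ℝ, 0 < C ∧
      ∀ ρ : ℝ, ρ ∈ Set.Ioc (0:ℝ) 1 →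
      ∀ K : ℝ → ℝ → ℂ, Measurable (Function.uncurry K) →
        (∀ᵐ q : ℝ × ℝ, ‖K q.1 q.2‖ ≤
          C₀ * (ρ⁻¹ * Real.exp (-θ * |q.1|) *
              (ρ * Real.exp (-θ * ρ * |q.2|) + Real.exp (-θ * |q.2|))
            + Real.exp (-ρ * |q.1 - q.2|) * (ρ + Real.exp (-θ * |q.2|)))) →
      ∀ f : ℝ → ℂ, Integrable f →
      ∀ p : ℝ≥0∞, 1 ≤ p →
        eLpNorm (fun x => ∫ y, K x y * f y) p volume ≤
          ENNReal.ofReal (C * ρ⁻¹ * ∫ y, ‖f y‖) := by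
  refine ⟨4 * C₀ * (1 + θ⁻¹), by positivity, ?_⟩
  rintro ρ hρ K - hK f hf p hp
  have hρ0 : 0 < ρ := hρ.1
  have hK_le : ∀ᵐ x, ∀ᵐ y, ‖K x y‖ ≤
      2 * C₀ * ρ⁻¹ * exp (-θ * |x|) + 2 * C₀ * exp (-ρ * |x - y|) := by
    rw [Measure.volume_eq_prod] at hK
    filter_upwards [Measure.ae_ae_of_ae_prod hK] with x hx
    filter_upwards [hx] with y hy
    calc _ ≤ _ := hy
      _ ≤ C₀ * (2 * ρ⁻¹ * exp (-θ * |x|) + 2 * exp (-ρ * |x - y|)) :=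
          mul_le_mul_of_nonneg_left (kernel_majorant_le hθ.le hρ x y) hC₀.le
      _ = _ := by ring
  refine (eLpNorm_integral_mul_le hf ((integrable_exp_neg_mul_abs hθ).const_mul _)
    ((integrable_exp_neg_mul_abs hρ0).const_mul _) (fun x => by positivity) (fun z => by positivity)
    (fun x => mul_le_of_le_one_right (by positivity) (exp_neg_mul_abs_le_one hθ.le x))
    (fun z => mul_le_of_le_one_right (by positivity) (exp_neg_mul_abs_le_one hρ0.le z))
    hK_le hp).trans ?_
  gcongr
  rw [integral_const_mul, integral_const_mul, integral_exp_neg_mul_abs hθ,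
    integral_exp_neg_mul_abs hρ0]
  have hρ_inv : 1 ≤ ρ⁻¹ := one_le_inv₀ hρ0 |>.mpr hρ.2
  refine max_le (le_of_eq (by field_simp; ring)) ?_
  nlinarith [mul_nonneg hC₀.le (sub_nonneg.mpr hρ_inv),
    mul_pos (mul_pos hC₀ (inv_pos.mpr hθ)) (inv_pos.mpr hρ0)]
end

section
/- Let ρ ∈ (0,1] and C₁, C₂ > 0, and let m_H, m₊, m₋ ≥ 1. Let H : [0,∞) → Mat(m_H,ℂ) and P₊ : [0,∞) → Mat(m₊,ℂ), P₋ : [0,∞) → Mat(m₋,ℂ) be continuous with ‖H(x)‖ ≤ C₁ρ and ‖P₊(x)‖, ‖P₋(x)‖ ≤ C₁ for all x ≥ 0. Let F_H, F_{P₊}, F_{P₋} be continuous integrable forcings and let u_H, u_{P₊}, u_{P₋} be bounded, square-integrable C¹ solutions on [0,∞) of u_H' = H u_H + F_H, u_{P₊}' = P₊ u_{P₊} + F_{P₊}, u_{P₋}' = P₋ u_{P₋} + F_{P₋}. Assume the maximal estimate: ρ²‖u_H‖²_{L²} + ‖u_{P₊}‖²_{L²} + ρ²‖u_{P₋}‖²_{L²}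 + |u_H(0)|² + |u_{P₊}(0)|² + ρ²|u_{P₋}(0)|² ≤ C₂ ( ∫₀^∞ |F_{P₊}||u_{P₊}| + ρ² ∫₀^∞ |F_{P₋}||u_{P₋}| + ∫₀^∞ |F_H||u_H| ). Then there is a constant C > 0 depending only on C₁ and C₂ (not on ρ) such that ρ² ( ‖u_H‖²_{L²} + ‖u_{P₊}‖²_{L²} + ‖u_{P₋}‖²_{L²} + ‖u_H‖²_{L∞} + ‖u_{P₊}‖²_{L∞} + ‖u_{P₋}‖²_{L∞} ) ≤ C ρ^{−1} ( ‖F_H‖_{L¹} + ‖F_{P₊}‖_{L¹} + ‖F_{P₋}‖_{L¹} )². In particular, for every p ∈ [2,∞], ‖(u_H, u_{P₊}, u_{P₋})‖_{L^p} ≤ C' ρ^{−3/2} ( ‖F_H‖_{L¹} + ‖F_{P₊}‖_{L¹} + ‖F_{P₋}‖_{L¹} ) with C' depending only on C₁, C₂. -/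
open MeasureTheory Set Matrix
open scoped ENNReal

/-!
Differentiating `|u|²` along `u' = A u + F` and integrating gives, for each block,
`(sup |u|)² ≤ |u(0)|² + 2 ‖A‖ ‖u‖²_{L²} + 2 sup |u| ‖F‖_{L¹}`.
Let `T = max (sup |u_H|, sup |u_{P₊}|, ρ sup |u_{P₋}|)`, the weighting seen by the maximal
estimate, and let `E` be the left side of that estimate, so `E ≤ C₂ T ‖F‖_{L¹}`. Because
`‖H‖ = O(ρ)`, the block bounds give `ρ T² ≤ (1 + 2C₁) E + 2 T ‖F‖_{L¹} ≤ K T ‖F‖_{L¹}` with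
`K = (1 + 2C₁) C₂ + 2`; hence `ρ T ≤ K ‖F‖_{L¹}`, and substituting back yields
`ρ³ (‖u‖²_{L²} + ‖u‖²_{L∞}) ≤ 3K (C₂ + K) ‖F‖²_{L¹}`. The `L^p` bounds for `2 ≤ p ≤ ∞` follow by
interpolating between `L²` and `L^∞`.
-/

open scoped InnerProductSpace in
theorem norm_sq_le_of_norm_deriv_le {E : Type*} [NormedAddCommGroup E] [InnerProductSpace ℝ E]
    {u u' F : ℝ → E} {a S x : ℝ} (ha : 0 ≤ a)
    (hu : ∀ t ∈ Ici (0:ℝ), HasDerivWithinAt u (u' t) (Ici 0) t)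
    (hu' : ∀ t ∈ Ici (0:ℝ), ‖u' t‖ ≤ a * ‖u t‖ + ‖F t‖)
    (hS : ∀ t ∈ Ici (0:ℝ), ‖u t‖ ≤ S)
    (hu2 : IntegrableOn (fun t => ‖u t‖ ^ 2) (Ici 0))
    (hF : IntegrableOn (fun t => ‖F t‖) (Ici 0)) (hx : 0 ≤ x) :
    ‖u x‖ ^ 2 ≤ ‖u 0‖ ^ 2 + 2 * a * (∫ t in Ici 0, ‖u t‖ ^ 2)
      + 2 * S * ∫ t in Ici 0, ‖F t‖ := by
  set g : ℝ → ℝ := fun t => 2 * a * ‖u t‖ ^ 2 + 2 * S * ‖F t‖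
  have hS0 : 0 ≤ S := (norm_nonneg _).trans (hS 0 self_mem_Ici)
  have hg : IntegrableOn g (Ici 0) := (hu2.const_mul _).add (hF.const_mul _)
  have hIcc : Icc 0 x ⊆ Ici (0:ℝ) := Icc_subset_Ici_self
  have hderiv : ∀ t ∈ Ioo 0 x, 2 * ⟪u t, u' t⟫_ℝ ≤ g t := fun t ht => by
    have ht : t ∈ Ici (0:ℝ) := hIcc (Ioo_subset_Icc_self ht)
    have hF_le : ‖u t‖ * ‖F t‖ ≤ S * ‖F t‖ := by gcongr; exact hS t ht
    calc 2 * ⟪u t, u' t⟫_ℝ ≤ 2 * (‖u t‖ * ‖u' t‖) := by gcongr; exact real_inner_le_norm _ _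
      _ ≤ 2 * (‖u t‖ * (a * ‖u t‖ + ‖F t‖)) := by gcongr; exact hu' t ht
      _ ≤ g t := by simp only [g]; linarith only [hF_le]
  have hFTC := intervalIntegral.sub_le_integral_of_hasDeriv_right_of_le
    (g := fun t => ‖u t‖ ^ 2) hx
    (fun t ht => (hu t (hIcc ht)).continuousWithinAt.norm.pow 2 |>.mono hIcc)
    (fun t ht => ((hu t (hIcc (Ioo_subset_Icc_self ht))).norm_sq).mono
      fun s hs => le_of_lt (ht.1.trans hs))
    (hg.mono_set hIcc) hderiv
  have hmono : ∫ t in 0..x, g t ≤ ∫ t in Ici 0, g t := by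
    rw [intervalIntegral.integral_of_le hx]
    exact setIntegral_mono_set hg
      (ae_restrict_of_forall_mem measurableSet_Ici fun t _ => by positivity)
      (Ioc_subset_Ioi_self.trans Ioi_subset_Ici_self).eventuallyLE
  have hsplit : ∫ t in Ici 0, g t =
      2 * a * (∫ t in Ici 0, ‖u t‖ ^ 2) + 2 * S * ∫ t in Ici 0, ‖F t‖ := by
    rw [integral_add (hu2.const_mul _) (hF.const_mul _), integral_const_mul, integral_const_mul]
  linarith only [hFTC, hmono, hsplit]

theorem exists_norm_le_and_sq_le_of_norm_deriv_le {E : Type*} [NormedAddCommGroup E]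
    [InnerProductSpace ℝ E] {u u' F : ℝ → E} {a M : ℝ} (ha : 0 ≤ a)
    (hu : ∀ t ∈ Ici (0:ℝ), HasDerivWithinAt u (u' t) (Ici 0) t)
    (hu' : ∀ t ∈ Ici (0:ℝ), ‖u' t‖ ≤ a * ‖u t‖ + ‖F t‖)
    (hM : ∀ t ∈ Ici (0:ℝ), ‖u t‖ ≤ M)
    (hu2 : IntegrableOn (fun t => ‖u t‖ ^ 2) (Ici 0))
    (hF : IntegrableOn (fun t => ‖F t‖) (Ici 0)) :
    ∃ S, (∀ t ∈ Ici (0:ℝ), ‖u t‖ ≤ S) ∧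
      S ^ 2 ≤ ‖u 0‖ ^ 2 + 2 * a * (∫ t in Ici 0, ‖u t‖ ^ 2) + 2 * S * ∫ t in Ici 0, ‖F t‖ := by
  set S := sSup ((‖u ·‖) '' Ici 0)
  have hS : ∀ t ∈ Ici (0:ℝ), ‖u t‖ ≤ S := fun t ht =>
    le_csSup ⟨M, forall_mem_image.2 hM⟩ (mem_image_of_mem _ ht)
  refine ⟨S, hS, ?_⟩
  have hsqrt :
      S ≤ √(‖u 0‖ ^ 2 + 2 * a * (∫ t in Ici 0, ‖u t‖ ^ 2) + 2 * S * ∫ t in Ici 0, ‖F t‖) :=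
    csSup_le (image_nonempty.2 nonempty_Ici) <| forall_mem_image.2 fun t ht =>
      Real.le_sqrt_of_sq_le (norm_sq_le_of_norm_deriv_le ha hu hu' hS hu2 hF ht)
  have hS0 : 0 ≤ S := (norm_nonneg _).trans (hS 0 self_mem_Ici)
  exact (Real.le_sqrt hS0 (by positivity)).1 hsqrt

theorem norm_toEuclideanLin_add_le {𝕜 n : Type*} [RCLike 𝕜] [Fintype n] [DecidableEq n]
    {A : Matrix n n 𝕜} {a : ℝ} (hA : ‖toEuclideanCLM (𝕜 := 𝕜) A‖ ≤ a)
    (v w : EuclideanSpace 𝕜 n) :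
    ‖toEuclideanLin A v + w‖ ≤ a * ‖v‖ + ‖w‖ :=
  (norm_add_le _ _).trans <| by
    gcongr
    exact ((toEuclideanCLM (𝕜 := 𝕜) A).le_opNorm v).trans (by gcongr)

theorem integral_norm_mul_norm_le_of_ae_norm_le {α E F : Type*} [MeasurableSpace α]
    {μ : Measure α} [NormedAddCommGroup E] [NormedAddCommGroup F] {f : α → E} {g : α → F} {S : ℝ}
    (hf : Integrable (fun x => ‖f x‖) μ) (hg : ∀ᵐ x ∂μ, ‖g x‖ ≤ S) :
    ∫ x, ‖f x‖ * ‖g x‖ ∂μ ≤ S * ∫ x, ‖f x‖ ∂μ := by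
  rw [← integral_const_mul]
  exact integral_mono_of_nonneg (ae_of_all _ fun x => by positivity) (hf.const_mul S)
    (hg.mono fun x hx => by dsimp only; rw [mul_comm S]; gcongr)

theorem weighted_sq_le_of_blocks {ρ C₁ E T IH Ip Im SH Sp Sm aH ap am NH Np Nm : ℝ}
    (hρ : ρ ∈ Ioc (0:ℝ) 1) (hC₁ : 0 ≤ C₁) (hNH : 0 ≤ NH) (hNp : 0 ≤ Np) (hNm : 0 ≤ Nm)
    (hT : 0 ≤ T) (hTH : SH ≤ T) (hTp : Sp ≤ T) (hTm : ρ * Sm ≤ T)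
    (hH : SH ^ 2 ≤ aH ^ 2 + 2 * (C₁ * ρ) * IH + 2 * SH * NH)
    (hp : Sp ^ 2 ≤ ap ^ 2 + 2 * C₁ * Ip + 2 * Sp * Np)
    (hm : Sm ^ 2 ≤ am ^ 2 + 2 * C₁ * Im + 2 * Sm * Nm)
    (hEH : aH ^ 2 ≤ E) (hEIH : ρ ^ 2 * IH ≤ E) (hEp : ap ^ 2 ≤ E) (hEIp : Ip ≤ E)
    (hEm : ρ ^ 2 * am ^ 2 ≤ E) (hEIm : ρ ^ 2 * Im ≤ E) :
    let R := (1 + 2 * C₁) * E + 2 * (T * (NH + Np + Nm))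
    ρ * SH ^ 2 ≤ R ∧ ρ * Sp ^ 2 ≤ R ∧ (ρ * Sm) ^ 2 ≤ R := by
  obtain ⟨hρ0, hρ1⟩ := hρ
  have hTN : T * NH ≤ T * (NH + Np + Nm) ∧ T * Np ≤ T * (NH + Np + Nm) ∧
      T * Nm ≤ T * (NH + Np + Nm) := by
    have h₁ := mul_nonneg hT hNH
    have h₂ := mul_nonneg hT hNp
    have h₃ := mul_nonneg hT hNm
    refine ⟨?_, ?_, ?_⟩ <;> linarith only [h₁, h₂, h₃]
  refine ⟨?_, ?_, ?_⟩
  · have hρSH : ρ * SH ≤ T := by nlinarith only [hTH, hT, hρ0, hρ1]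
    linarith only [mul_le_mul_of_nonneg_left hH hρ0.le, mul_le_mul_of_nonneg_right hρSH hNH,
      mul_le_mul_of_nonneg_right hρ1 (sq_nonneg aH), mul_le_mul_of_nonneg_left hEIH hC₁,
      hEH, hTN.1]
  · linarith only [hp, mul_le_mul_of_nonneg_right hTp hNp,
      mul_le_mul_of_nonneg_right hρ1 (sq_nonneg Sp), mul_le_mul_of_nonneg_left hEIp hC₁, hEp,
      hTN.2.1]
  · linarith only [mul_le_mul_of_nonneg_left hm (sq_nonneg ρ),
      mul_le_mul hTm (mul_le_of_le_one_left hNm hρ1) (by positivity) hT,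
      mul_le_mul_of_nonneg_left hEIm hC₁, hEm, hTN.2.2]

theorem mul_add_le_of_mul_sq_le {ρ C₁ C₂ K E T N : ℝ} (hρ : 0 < ρ) (hC₁ : 0 ≤ C₁)
    (hC₂ : 0 ≤ C₂) (hK : (1 + 2 * C₁) * C₂ + 2 ≤ K) (hT : 0 ≤ T) (hN : 0 ≤ N)
    (hE : E ≤ C₂ * (T * N))
    (hTE : ρ * T ^ 2 ≤ (1 + 2 * C₁) * E + 2 * (T * N)) :
    ρ * (E + ((1 + 2 * C₁) * E + 2 * (T * N))) ≤ K * (C₂ + K) * N ^ 2 := by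
  have hTN : 0 ≤ T * N := by positivity
  have hK0 : 0 ≤ K := (by positivity : 0 ≤ (1 + 2 * C₁) * C₂ + 2).trans hK
  have hRK : (1 + 2 * C₁) * E + 2 * (T * N) ≤ K * (T * N) := by
    linarith only [mul_le_mul_of_nonneg_left hE (by positivity : 0 ≤ 1 + 2 * C₁),
      mul_le_mul_of_nonneg_right hK hTN]
  have hρT : ρ * T ≤ K * N := by
    rcases hT.eq_or_lt with rfl | hTpos
    · simpa using mul_nonneg hK0 hN
    · exact le_of_mul_le_mul_right (by linarith only [hTE, hRK]) hTpos
  linarith only [mul_le_mul_of_nonneg_left hRK hρ.le, mul_le_mul_of_nonneg_left hE hρ.le,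
    mul_le_mul_of_nonneg_left hρT (by positivity : 0 ≤ K * N),
    mul_le_mul_of_nonneg_left hρT (by positivity : 0 ≤ C₂ * N)]

theorem pow_three_mul_block_energy_le {ρ C₁ C₂ K IH Ip Im SH Sp Sm aH ap am NH Np Nm : ℝ}
    (hρ : ρ ∈ Ioc (0:ℝ) 1) (hC₁ : 0 ≤ C₁) (hC₂ : 0 ≤ C₂) (hK : (1 + 2 * C₁) * C₂ + 2 ≤ K)
    (hIH : 0 ≤ IH) (hIp : 0 ≤ Ip) (hIm : 0 ≤ Im) (hNH : 0 ≤ NH) (hNp : 0 ≤ Np) (hNm : 0 ≤ Nm)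
    (hSm : 0 ≤ Sm)
    (hH : SH ^ 2 ≤ aH ^ 2 + 2 * (C₁ * ρ) * IH + 2 * SH * NH)
    (hp : Sp ^ 2 ≤ ap ^ 2 + 2 * C₁ * Ip + 2 * Sp * Np)
    (hm : Sm ^ 2 ≤ am ^ 2 + 2 * C₁ * Im + 2 * Sm * Nm)
    (hmax : ρ ^ 2 * IH + Ip + ρ ^ 2 * Im + aH ^ 2 + ap ^ 2 + ρ ^ 2 * am ^ 2 ≤
      C₂ * (Sp * Np + ρ ^ 2 * (Sm * Nm) + SH * NH)) :
    ρ ^ 3 * (IH + Ip + Im + SH ^ 2 + Sp ^ 2 + Sm ^ 2) ≤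
      3 * K * (C₂ + K) * (NH + Np + Nm) ^ 2 := by
  obtain ⟨hρ0, hρ1⟩ := hρ
  set E := ρ ^ 2 * IH + Ip + ρ ^ 2 * Im + aH ^ 2 + ap ^ 2 + ρ ^ 2 * am ^ 2 with hE
  have hE_ge : ρ ^ 2 * IH ≤ E ∧ Ip ≤ E ∧ ρ ^ 2 * Im ≤ E ∧ aH ^ 2 ≤ E ∧ ap ^ 2 ≤ E ∧
      ρ ^ 2 * am ^ 2 ≤ E := by
    have h₁ : 0 ≤ ρ ^ 2 * IH := by positivity
    have h₂ : 0 ≤ ρ ^ 2 * Im := by positivity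
    have h₃ : 0 ≤ ρ ^ 2 * am ^ 2 := by positivity
    refine ⟨?_, ?_, ?_, ?_, ?_, ?_⟩ <;>
      linarith only [hE, h₁, h₂, h₃, hIp, sq_nonneg aH, sq_nonneg ap]
  obtain ⟨hEIH, hEIp, hEIm, hEH, hEp, hEm⟩ := hE_ge
  obtain ⟨T, hTH, hTp, hTm, hT⟩ : ∃ T, SH ≤ T ∧ Sp ≤ T ∧ ρ * Sm ≤ T ∧
      (T = SH ∨ T = Sp ∨ T = ρ * Sm) :=
    ⟨_, le_max_left _ _, (le_max_left _ _).trans (le_max_right _ _),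
      (le_max_right _ _).trans (le_max_right _ _),
      (max_choice _ _).imp_right fun h => (max_choice _ _).imp h.trans h.trans⟩
  have hT0 : 0 ≤ T := (mul_nonneg hρ0.le hSm).trans hTm
  have hEN : E ≤ C₂ * (T * (NH + Np + Nm)) := hmax.trans <| by
    have hρSm : ρ * (ρ * Sm) ≤ T := (mul_le_of_le_one_left (by positivity) hρ1).trans hTm
    gcongr
    linarith only [mul_le_mul_of_nonneg_right hTp hNp, mul_le_mul_of_nonneg_right hTH hNH,
      mul_le_mul_of_nonneg_right hρSm hNm]
  obtain ⟨hRH, hRp, hRm⟩ := weighted_sq_le_of_blocks ⟨hρ0, hρ1⟩ hC₁ hNH hNp hNm hT0 hTH hTp hTm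
    hH hp hm hEH hEIH hEp hEIp hEm hEIm
  set R := (1 + 2 * C₁) * E + 2 * (T * (NH + Np + Nm))
  have hRT : ρ * T ^ 2 ≤ R := by
    rcases hT with rfl | rfl | rfl
    · exact hRH
    · exact hRp
    · exact (mul_le_of_le_one_left (sq_nonneg _) hρ1).trans hRm
  have hER := mul_add_le_of_mul_sq_le hρ0 hC₁ hC₂ hK hT0 (by positivity) hEN hRT
  have hR0 : 0 ≤ R := (by positivity : 0 ≤ ρ * Sp ^ 2).trans hRp
  have hρ2 : ρ ^ 2 ≤ ρ := by nlinarith only [hρ0, hρ1]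
  have hρ3 : ρ ^ 3 ≤ ρ := by nlinarith only [hρ0, hρ1, hρ2]
  linarith only [hER, mul_le_mul_of_nonneg_left hRH (sq_nonneg ρ),
    mul_le_mul_of_nonneg_left hRp (sq_nonneg ρ), mul_le_mul_of_nonneg_right hρ2 hR0,
    mul_le_mul_of_nonneg_left hRm hρ0.le, mul_le_mul_of_nonneg_left hEIH hρ0.le,
    mul_le_mul_of_nonneg_left hEIp hρ0.le, mul_le_mul_of_nonneg_right hρ3 hIp,
    mul_le_mul_of_nonneg_left hEIm hρ0.le]

theorem sq_mul_le_of_pow_three_mul_le {ρ C N Q : ℝ} (hρ : 0 < ρ) (h : ρ ^ 3 * Q ≤ C * N ^ 2) :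
    ρ ^ 2 * Q ≤ C * ρ⁻¹ * N ^ 2 := by
  rw [mul_right_comm, le_mul_inv_iff₀ hρ]
  linarith only [h]

theorem le_sq_of_pow_three_mul_le {ρ C N Q : ℝ} (hρ : 0 < ρ) (hC : 0 ≤ C)
    (h : ρ ^ 3 * Q ≤ C * N ^ 2) : Q ≤ (√C * ρ ^ (-(3 / 2 : ℝ)) * N) ^ 2 := by
  have hρ3 : (ρ ^ (-(3 / 2 : ℝ))) ^ 2 = (ρ ^ 3)⁻¹ := by
    rw [← Real.rpow_natCast, ← Real.rpow_mul hρ.le, ← Real.rpow_natCast, ← Real.rpow_neg hρ.le]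
    norm_num
  rw [mul_pow, mul_pow, Real.sq_sqrt hC, hρ3, mul_right_comm, ← div_eq_mul_inv,
    le_div_iff₀ (by positivity)]
  linarith only [h]

theorem eLpNorm_le_of_eLpNorm_le_of_ae_enorm_le {α E : Type*} [MeasurableSpace α]
    {μ : Measure α} [NormedAddCommGroup E] {f : α → E} {p q B : ℝ≥0∞} (hq : q ≠ 0) (hqp : q ≤ p)
    (hfq : eLpNorm f q μ ≤ B) (hf : ∀ᵐ x ∂μ, ‖f x‖ₑ ≤ B) : eLpNorm f p μ ≤ B := by
  rcases eq_or_ne p ∞ with rfl | hp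
  · rw [eLpNorm_exponent_top]
    exact eLpNormEssSup_le_of_ae_enorm_bound hf
  rcases eq_or_ne B ∞ with rfl | hB
  · exact le_top
  have hq' : q ≠ ∞ := ne_top_of_le_ne_top hp hqp
  have hq0 : 0 < q.toReal := ENNReal.toReal_pos hq hq'
  have hqp' : q.toReal ≤ p.toReal := ENNReal.toReal_mono hp hqp
  have hp0 : 0 < p.toReal := hq0.trans_le hqp'
  have hlq : ∫⁻ x, ‖f x‖ₑ ^ q.toReal ∂μ ≤ B ^ q.toReal := by
    rw [lintegral_rpow_enorm_eq_rpow_eLpNorm' hq0, ← eLpNorm_eq_eLpNorm' hq hq']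
    gcongr
  have hpt : ∀ᵐ x ∂μ, ‖f x‖ₑ ^ p.toReal ≤ B ^ (p.toReal - q.toReal) * ‖f x‖ₑ ^ q.toReal := by
    filter_upwards [hf] with x hx
    calc ‖f x‖ₑ ^ p.toReal = ‖f x‖ₑ ^ (p.toReal - q.toReal) * ‖f x‖ₑ ^ q.toReal := by
          rw [← ENNReal.rpow_add_of_nonneg _ _ (by linarith) hq0.le, sub_add_cancel]
      _ ≤ _ := by gcongr
  rw [eLpNorm_eq_lintegral_rpow_enorm_toReal (hq.bot_lt.trans_le hqp).ne' hp]
  calc (∫⁻ x, ‖f x‖ₑ ^ p.toReal ∂μ) ^ (1 / p.toReal)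
      ≤ (B ^ (p.toReal - q.toReal) * ∫⁻ x, ‖f x‖ₑ ^ q.toReal ∂μ) ^ (1 / p.toReal) := by
        rw [← lintegral_const_mul' _ _ (ENNReal.rpow_ne_top_of_nonneg (by linarith) hB)]
        gcongr ?_ ^ _
        exact lintegral_mono_ae hpt
    _ ≤ (B ^ (p.toReal - q.toReal) * B ^ q.toReal) ^ (1 / p.toReal) := by gcongr
    _ = B := by
        rw [← ENNReal.rpow_add_of_nonneg _ _ (by linarith) hq0.le, sub_add_cancel,
          ← ENNReal.rpow_mul, mul_one_div_cancel hp0.ne', ENNReal.rpow_one]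

theorem eLpNorm_two_le_of_norm_sq_le {α E : Type*} [MeasurableSpace α] {μ : Measure α}
    [NormedAddCommGroup E] {f : α → E} {g : α → ℝ} {B : ℝ} (hB : 0 ≤ B) (hg : Integrable g μ)
    (hfg : ∀ᵐ x ∂μ, ‖f x‖ ^ 2 ≤ g x) (hgB : ∫ x, g x ∂μ ≤ B ^ 2) :
    eLpNorm f 2 μ ≤ ENNReal.ofReal B := by
  have hsq : ∫⁻ x, ‖f x‖ₑ ^ (2:ℝ) ∂μ ≤ ENNReal.ofReal B ^ (2:ℝ) := calc
    ∫⁻ x, ‖f x‖ₑ ^ (2:ℝ) ∂μ ≤ ∫⁻ x, ENNReal.ofReal (g x) ∂μ := by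
      refine lintegral_mono_ae (hfg.mono fun x hx => ?_)
      rw [← ofReal_norm, ENNReal.ofReal_rpow_of_nonneg (norm_nonneg _) zero_le_two]
      exact ENNReal.ofReal_le_ofReal (by exact_mod_cast hx)
    _ = ENNReal.ofReal (∫ x, g x ∂μ) :=
      (ofReal_integral_eq_lintegral_ofReal hg (hfg.mono fun x hx => (sq_nonneg _).trans hx)).symm
    _ ≤ ENNReal.ofReal B ^ (2:ℝ) := by
      rw [ENNReal.ofReal_rpow_of_nonneg hB zero_le_two]
      exact ENNReal.ofReal_le_ofReal (by exact_mod_cast hgB)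
  rw [eLpNorm_eq_lintegral_rpow_enorm_toReal two_ne_zero ENNReal.ofNat_ne_top,
    ENNReal.toReal_ofNat]
  calc (∫⁻ x, ‖f x‖ₑ ^ (2:ℝ) ∂μ) ^ (1 / (2:ℝ))
      ≤ (ENNReal.ofReal B ^ (2:ℝ)) ^ (1 / (2:ℝ)) := by gcongr
    _ = ENNReal.ofReal B := by
        rw [← ENNReal.rpow_mul, mul_one_div_cancel two_ne_zero, ENNReal.rpow_one]

theorem eLpNorm_prod_prod_le {α E₁ E₂ E₃ : Type*} [MeasurableSpace α] {μ : Measure α}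
    [NormedAddCommGroup E₁] [NormedAddCommGroup E₂] [NormedAddCommGroup E₃]
    {u₁ : α → E₁} {u₂ : α → E₂} {u₃ : α → E₃} {S₁ S₂ S₃ B : ℝ} (hB : 0 ≤ B)
    (h₁ : Integrable (fun x => ‖u₁ x‖ ^ 2) μ) (h₂ : Integrable (fun x => ‖u₂ x‖ ^ 2) μ)
    (h₃ : Integrable (fun x => ‖u₃ x‖ ^ 2) μ)
    (hS : ∀ᵐ x ∂μ, ‖u₁ x‖ ≤ S₁ ∧ ‖u₂ x‖ ≤ S₂ ∧ ‖u₃ x‖ ≤ S₃)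
    (hsum : ∫ x, ‖u₁ x‖ ^ 2 ∂μ + ∫ x, ‖u₂ x‖ ^ 2 ∂μ + ∫ x, ‖u₃ x‖ ^ 2 ∂μ
      + S₁ ^ 2 + S₂ ^ 2 + S₃ ^ 2 ≤ B ^ 2) {p : ℝ≥0∞} (hp : 2 ≤ p) :
    eLpNorm (fun x => (u₁ x, u₂ x, u₃ x)) p μ ≤ ENNReal.ofReal B := by
  have hI : 0 ≤ ∫ x, ‖u₁ x‖ ^ 2 ∂μ + ∫ x, ‖u₂ x‖ ^ 2 ∂μ + ∫ x, ‖u₃ x‖ ^ 2 ∂μ := by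
    positivity
  have hle : ∀ {v S : ℝ}, 0 ≤ v → v ≤ S → S ^ 2 ≤ B ^ 2 → v ≤ B := fun hv hvS hSB =>
    (sq_le_sq₀ hv hB).1 ((pow_le_pow_left₀ hv hvS 2).trans hSB)
  refine eLpNorm_le_of_eLpNorm_le_of_ae_enorm_le two_ne_zero hp ?_ ?_
  · refine eLpNorm_two_le_of_norm_sq_le
      (g := fun x => ‖u₁ x‖ ^ 2 + ‖u₂ x‖ ^ 2 + ‖u₃ x‖ ^ 2) hB ((h₁.add h₂).add h₃)
      (ae_of_all _ fun x => ?_) ?_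
    · simp only [Prod.norm_mk]
      rcases max_choice ‖u₂ x‖ ‖u₃ x‖ with h | h <;> rw [h] <;>
        rcases max_choice ‖u₁ x‖ _ with h' | h' <;> rw [h'] <;>
        nlinarith [sq_nonneg ‖u₁ x‖, sq_nonneg ‖u₂ x‖, sq_nonneg ‖u₃ x‖]
    · rw [integral_add (f := fun x => ‖u₁ x‖ ^ 2 + ‖u₂ x‖ ^ 2) (h₁.add h₂) h₃,
        integral_add h₁ h₂]
      linarith only [hsum, sq_nonneg S₁, sq_nonneg S₂, sq_nonneg S₃]
  · filter_upwards [hS] with x ⟨hx₁, hx₂, hx₃⟩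
    rw [← ofReal_norm]
    refine ENNReal.ofReal_le_ofReal (norm_prod_le_iff.2 ⟨?_, norm_prod_le_iff.2 ⟨?_, ?_⟩⟩)
    · exact hle (norm_nonneg _) hx₁ (by linarith only [hsum, hI, sq_nonneg S₂, sq_nonneg S₃])
    · exact hle (norm_nonneg _) hx₂ (by linarith only [hsum, hI, sq_nonneg S₁, sq_nonneg S₃])
    · exact hle (norm_nonneg _) hx₃ (by linarith only [hsum, hI, sq_nonneg S₁, sq_nonneg S₂])

/-- The key new argument of the paper (proof of Proposition 2.4, case β = 0):
combining the pointwise ODE estimate for the hyperbolic block `H` (of size `O(ρ)`) and the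
parabolic blocks `P₊, P₋` (of size `O(1)`) with the GMWZ degenerate-symmetrizer maximal L²
estimate (taken as a hypothesis) yields
`ρ²(‖u‖²_{L²} + ‖u‖²_{L∞}) ≤ C ρ⁻¹ (‖F_H‖_{L¹} + ‖F_{P₊}‖_{L¹} + ‖F_{P₋}‖_{L¹})²`
and hence the `L¹ → L^p` bound `‖u‖_{L^p} ≤ C' ρ^{-3/2} ‖F‖_{L¹}` for all `p ∈ [2,∞]`,
with constants depending only on `C₁, C₂`. -/
theorem stmt_10 (C₁ C₂ : ℝ) (hC₁ : 0 < C₁) (hC₂ : 0 < C₂) :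
    ∃ C : ℝ, 0 < C ∧ ∃ C' : ℝ, 0 < C' ∧
      ∀ (ρ : ℝ), ρ ∈ Set.Ioc (0:ℝ) 1 →
      ∀ (mH mp mm : ℕ), 1 ≤ mH → 1 ≤ mp → 1 ≤ mm →
      ∀ (H : ℝ → Matrix (Fin mH) (Fin mH) ℂ)
        (Pp : ℝ → Matrix (Fin mp) (Fin mp) ℂ)
        (Pm : ℝ → Matrix (Fin mm) (Fin mm) ℂ)
        (FH uH : ℝ → EuclideanSpace ℂ (Fin mH))
        (Fp up : ℝ → EuclideanSpace ℂ (Fin mp))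
        (Fm um : ℝ → EuclideanSpace ℂ (Fin mm)),
        ContinuousOn H (Ici 0) → ContinuousOn Pp (Ici 0) → ContinuousOn Pm (Ici 0) →
        (∀ x ∈ Ici (0:ℝ), ‖Matrix.toEuclideanCLM (𝕜 := ℂ) (H x)‖ ≤ C₁ * ρ) →
        (∀ x ∈ Ici (0:ℝ), ‖Matrix.toEuclideanCLM (𝕜 := ℂ) (Pp x)‖ ≤ C₁) →
        (∀ x ∈ Ici (0:ℝ), ‖Matrix.toEuclideanCLM (𝕜 := ℂ) (Pm x)‖ ≤ C₁) →
        ContinuousOn FH (Ici 0) → ContinuousOn Fp (Ici 0) → ContinuousOn Fm (Ici 0) →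
        IntegrableOn (fun x => ‖FH x‖) (Ici 0) →
        IntegrableOn (fun x => ‖Fp x‖) (Ici 0) →
        IntegrableOn (fun x => ‖Fm x‖) (Ici 0) →
        (∃ M : ℝ, ∀ x ∈ Ici (0:ℝ), ‖uH x‖ ≤ M ∧ ‖up x‖ ≤ M ∧ ‖um x‖ ≤ M) →
        IntegrableOn (fun x => ‖uH x‖ ^ 2) (Ici 0) →
        IntegrableOn (fun x => ‖up x‖ ^ 2) (Ici 0) →
        IntegrableOn (fun x => ‖um x‖ ^ 2) (Ici 0) →
        (∀ x ∈ Ici (0:ℝ), HasDerivWithinAt uH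
            (Matrix.toEuclideanLin (H x) (uH x) + FH x) (Ici 0) x) →
        (∀ x ∈ Ici (0:ℝ), HasDerivWithinAt up
            (Matrix.toEuclideanLin (Pp x) (up x) + Fp x) (Ici 0) x) →
        (∀ x ∈ Ici (0:ℝ), HasDerivWithinAt um
            (Matrix.toEuclideanLin (Pm x) (um x) + Fm x) (Ici 0) x) →
        -- the GMWZ maximal L² estimate
        (ρ ^ 2 * (∫ x in Ici (0:ℝ), ‖uH x‖ ^ 2) + (∫ x in Ici (0:ℝ), ‖up x‖ ^ 2)
            + ρ ^ 2 * (∫ x in Ici (0:ℝ), ‖um x‖ ^ 2)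
            + ‖uH 0‖ ^ 2 + ‖up 0‖ ^ 2 + ρ ^ 2 * ‖um 0‖ ^ 2 ≤
          C₂ * ((∫ x in Ici (0:ℝ), ‖Fp x‖ * ‖up x‖)
            + ρ ^ 2 * (∫ x in Ici (0:ℝ), ‖Fm x‖ * ‖um x‖)
            + ∫ x in Ici (0:ℝ), ‖FH x‖ * ‖uH x‖)) →
        -- conclusions
        (∀ x ∈ Ici (0:ℝ),
          ρ ^ 2 * ((∫ z in Ici (0:ℝ), ‖uH z‖ ^ 2) + (∫ z in Ici (0:ℝ), ‖up z‖ ^ 2)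
              + (∫ z in Ici (0:ℝ), ‖um z‖ ^ 2)
              + ‖uH x‖ ^ 2 + ‖up x‖ ^ 2 + ‖um x‖ ^ 2) ≤
            C * ρ⁻¹ * ((∫ z in Ici (0:ℝ), ‖FH z‖) + (∫ z in Ici (0:ℝ), ‖Fp z‖)
              + ∫ z in Ici (0:ℝ), ‖Fm z‖) ^ 2) ∧
        ∀ p : ℝ≥0∞, 2 ≤ p →
          eLpNorm (fun x => (uH x, up x, um x)) p (volume.restrict (Ici 0)) ≤
            ENNReal.ofReal (C' * ρ ^ (-(3 / 2 : ℝ)) *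
              ((∫ z in Ici (0:ℝ), ‖FH z‖) + (∫ z in Ici (0:ℝ), ‖Fp z‖)
                + ∫ z in Ici (0:ℝ), ‖Fm z‖)) := by
  set K := (1 + 2 * C₁) * C₂ + 2
  have hC : 0 < 3 * K * (C₂ + K) := by positivity
  refine ⟨_, hC, _, Real.sqrt_pos.2 hC, ?_⟩
  rintro ρ hρ mH mp mm - - - H Pp Pm FH uH Fp up Fm um - - - hH hPp hPm - - - hFH hFp hFm ⟨M, hM⟩
    hu2H hu2p hu2m hodeH hodep hodem hmax
  have hρ0 : 0 < ρ := hρ.1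
  obtain ⟨SH, hSH, hSH2⟩ := exists_norm_le_and_sq_le_of_norm_deriv_le (by positivity) hodeH
    (fun t ht => norm_toEuclideanLin_add_le (hH t ht) _ _) (fun t ht => (hM t ht).1) hu2H hFH
  obtain ⟨Sp, hSp, hSp2⟩ := exists_norm_le_and_sq_le_of_norm_deriv_le hC₁.le hodep
    (fun t ht => norm_toEuclideanLin_add_le (hPp t ht) _ _) (fun t ht => (hM t ht).2.1) hu2p hFp
  obtain ⟨Sm, hSm, hSm2⟩ := exists_norm_le_and_sq_le_of_norm_deriv_le hC₁.le hodem
    (fun t ht => norm_toEuclideanLin_add_le (hPm t ht) _ _) (fun t ht => (hM t ht).2.2) hu2m hFm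
  have hforcing := hmax.trans <| show _ ≤ C₂ * (Sp * (∫ x in Ici 0, ‖Fp x‖)
      + ρ ^ 2 * (Sm * ∫ x in Ici 0, ‖Fm x‖) + SH * ∫ x in Ici 0, ‖FH x‖) by
    gcongr <;> exact integral_norm_mul_norm_le_of_ae_norm_le ‹_›
      (ae_restrict_of_forall_mem measurableSet_Ici ‹_›)
  have hQ := pow_three_mul_block_energy_le hρ hC₁.le hC₂.le le_rfl (by positivity) (by positivity)
    (by positivity) (by positivity) (by positivity) (by positivity)
    ((norm_nonneg _).trans (hSm 0 self_mem_Ici)) hSH2 hSp2 hSm2 hforcing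
  refine ⟨fun x hx => le_trans ?_ (sq_mul_le_of_pow_three_mul_le hρ0 hQ), fun p hp => ?_⟩
  · gcongr
    exacts [hSH x hx, hSp x hx, hSm x hx]
  exact eLpNorm_prod_prod_le (by positivity) hu2H hu2p hu2m
    (ae_restrict_of_forall_mem measurableSet_Ici fun x hx => ⟨hSH x hx, hSp x hx, hSm x hx⟩)
    (le_sq_of_pow_three_mul_le hρ0 hC.le hQ) hp
end

section
/- Let n₊, n₋ ≥ 1, θ > 0 and c ≥ 0. Let Q₊ : [0,∞) → Mat(n₊,ℂ) and Q₋ : [0,∞) → Mat(n₋,ℂ) be continuous, let F₊, F₋ be continuous and integrable, and let U₊ : [0,∞) → ℂ^{n₊}, U₋ : [0,∞) → ℂ^{n₋} be bounded, square-integrable C¹ solutions of U₊' = Q₊U₊ + F₊ and U₋' = Q₋U₋ + F₋ with U₊(z), U₋(z) → 0 as z → ∞. Suppose there are Hermitian matrices S₊, S₋ with ⟨S₊u,u⟩ ≥ |u|², Re(S₊Q₊(z)) ≥ θ·Id for all z, and ⟨S₋u,u⟩ ≤ −|u|², Re(S₋Q₋(z)) ≥ θ·Id for all z, and that the boundary values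 satisfy |U₋(0)| ≤ c |U₊(0)|. Then there is a constant C > 0 depending only on ‖S₊‖, ‖S₋‖ and c (not on θ) such that sup_{z≥0}(|U₊(z)|² + |U₋(z)|²) + θ ∫₀^∞ (|U₊|² + |U₋|²) ≤ C ( ∫₀^∞ |F₊| + ∫₀^∞ |F₋| )². -/
/-!
With `E(z) = Re⟪S U(z), U(z)⟫`, the equation `U' = QU + F` and `Re(SQ) ≥ θ` give
`E' ≥ 2θ|U|² - 2‖S‖ |F| |U|`. Write `m = sup |U|`. For the incoming block `E ≥ |U|²` and
`E(∞) = 0`, so integrating from `t` to `∞` bounds `|U(t)|² + 2θ ∫ₜ^∞ |U|²` by `2‖S‖ m ∫|F|`;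
taking the supremum over `t` gives `m ≤ 2‖S‖ ∫|F|`. For the outgoing block `E ≤ -|U|²`, so
integrating from `0` to `t` bounds `|U(t)|² + 2θ ∫₀ᵗ |U|²` by `‖S‖ |U(0)|² + 2‖S‖ m ∫|F|`, which
again controls `m`; the boundary condition `|U₋(0)| ≤ c |U₊(0)|` and the incoming estimate
control `|U₋(0)|`.
-/

open MeasureTheory Set Matrix Filter Topology RCLike
open scoped InnerProductSpace

section Energy

variable {𝕜 E : Type*} [RCLike 𝕜] [NormedAddCommGroup E] [InnerProductSpace 𝕜 E]
  {S : E →L[𝕜] E}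

theorem sub_mul_le_re_inner_apply_add (hS : (S : E →ₗ[𝕜] E).IsSymmetric) {K θ : ℝ}
    (hSK : ‖S‖ ≤ K) {u v f : E} (hv : θ * ‖u‖ ^ 2 ≤ re ⟪S v, u⟫_𝕜) :
    θ * ‖u‖ ^ 2 - K * ‖f‖ * ‖u‖ ≤ re ⟪S u, v + f⟫_𝕜 := by
  have hSf : ‖S f‖ * ‖u‖ ≤ K * ‖f‖ * ‖u‖ := by gcongr; exact S.le_of_opNorm_le hSK f
  have hf : -(‖S f‖ * ‖u‖) ≤ re ⟪S u, f⟫_𝕜 := by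
    rw [hS.apply_clm, inner_re_symm]
    exact neg_le_of_abs_le ((abs_re_le_norm _).trans (norm_inner_le_norm _ _))
  rw [inner_add_right, map_add, hS.apply_clm u v, inner_re_symm]
  linarith

theorem abs_re_inner_apply_self_le {K : ℝ} (hSK : ‖S‖ ≤ K) (u : E) :
    |re ⟪S u, u⟫_𝕜| ≤ K * ‖u‖ ^ 2 :=
  calc |re ⟪S u, u⟫_𝕜| ≤ ‖S u‖ * ‖u‖ := (abs_re_le_norm _).trans (norm_inner_le_norm _ _)
    _ ≤ K * ‖u‖ * ‖u‖ := by gcongr; exact S.le_of_opNorm_le hSK u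
    _ = K * ‖u‖ ^ 2 := by ring

variable [NormedSpace ℝ E] [IsScalarTower ℝ 𝕜 E]

theorem HasDerivWithinAt.re_inner_apply_self (hS : (S : E →ₗ[𝕜] E).IsSymmetric)
    {U : ℝ → E} {U' : E} {s : Set ℝ} {z : ℝ} (hU : HasDerivWithinAt U U' s z) :
    HasDerivWithinAt (fun t => re ⟪S (U t), U t⟫_𝕜) (2 * re ⟪S (U z), U'⟫_𝕜) s z := by
  refine (reCLM.hasFDerivAt.comp_hasDerivWithinAt z
    (((S.restrictScalars ℝ).hasFDerivAt.comp_hasDerivWithinAt z hU).inner 𝕜 hU)).congr_deriv ?_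
  simp only [Function.comp_apply, reCLM_apply, map_add, ContinuousLinearMap.coe_restrictScalars']
  rw [hS.apply_clm, inner_re_symm]
  ring

theorem energy_inequality (hS : (S : E →ₗ[𝕜] E).IsSymmetric) {K θ a b : ℝ} (hSK : ‖S‖ ≤ K)
    (hab : a ≤ b) {Q : ℝ → E →ₗ[𝕜] E} {U F : ℝ → E} (hF : ContinuousOn F (Icc a b))
    (hU : ∀ z ∈ Icc a b, HasDerivWithinAt U (Q z (U z) + F z) (Icc a b) z)
    (hQ : ∀ z ∈ Icc a b, ∀ u, θ * ‖u‖ ^ 2 ≤ re ⟪S (Q z u), u⟫_𝕜) :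
    2 * θ * (∫ x in a..b, ‖U x‖ ^ 2) - 2 * K * (∫ x in a..b, ‖F x‖ * ‖U x‖)
      ≤ re ⟪S (U b), U b⟫_𝕜 - re ⟪S (U a), U a⟫_𝕜 := by
  have hUc : ContinuousOn U (Icc a b) := fun z hz => (hU z hz).continuousWithinAt
  have hU2 : IntervalIntegrable (fun x => ‖U x‖ ^ 2) volume a b :=
    (hUc.norm.pow 2).intervalIntegrable_of_Icc hab
  have hFU : IntervalIntegrable (fun x => ‖F x‖ * ‖U x‖) volume a b :=
    (hF.norm.mul hUc.norm).intervalIntegrable_of_Icc hab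
  rw [← intervalIntegral.integral_const_mul, ← intervalIntegral.integral_const_mul,
    ← intervalIntegral.integral_sub (hU2.const_mul _) (hFU.const_mul _)]
  refine intervalIntegral.integral_le_sub_of_hasDeriv_right_of_le hab
    (continuous_re.comp_continuousOn ((S.continuous.comp_continuousOn hUc).inner hUc))
    (fun x hx => ((hU x (Ioo_subset_Icc_self hx)).re_inner_apply_self hS).mono_of_mem_nhdsWithin
      (Icc_mem_nhdsGT_of_mem ⟨hx.1.le, hx.2⟩))
    ((continuousOn_const.mul (hUc.norm.pow 2)).sub
      (continuousOn_const.mul (hF.norm.mul hUc.norm))).integrableOn_Icc fun x hx => ?_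
  have := sub_mul_le_re_inner_apply_add hS hSK (f := F x) (hQ x (Ioo_subset_Icc_self hx) (U x))
  linarith

end Energy

theorem add_two_mul_le_of_sq_le {A b m : ℝ} (h : m ^ 2 ≤ A + 2 * b * m) :
    A + 2 * b * m ≤ 2 * A + 4 * b ^ 2 := by
  nlinarith [sq_nonneg (m - 2 * b)]

theorem mul_sq_add_mul_sq_le {A B x y : ℝ} (hA : 0 ≤ A) (hB : 0 ≤ B) (hx : 0 ≤ x) (hy : 0 ≤ y) :
    A * x ^ 2 + B * y ^ 2 ≤ (A + B + 1) * (x + y) ^ 2 := by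
  nlinarith [mul_nonneg hA (mul_nonneg hx hy), mul_nonneg hB (mul_nonneg hx hy),
    sq_nonneg (x + y)]

theorem IsLUB.sq_le_of_forall_sq_le {α : Type*} {f : α → ℝ} {s : Set α} {m X : ℝ}
    (hm : IsLUB (f '' s) m) (hs : s.Nonempty) (hf : ∀ x ∈ s, 0 ≤ f x)
    (hX : ∀ x ∈ s, f x ^ 2 ≤ X) : m ^ 2 ≤ X := by
  obtain ⟨x₀, hx₀⟩ := hs
  have hm0 : 0 ≤ m := (hf x₀ hx₀).trans (hm.1 (mem_image_of_mem f hx₀))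
  have hX0 : 0 ≤ X := (sq_nonneg _).trans (hX x₀ hx₀)
  have hmX : m ≤ √X := hm.2 <| forall_mem_image.2 fun x hx => Real.le_sqrt_of_sq_le (hX x hx)
  calc m ^ 2 ≤ √X ^ 2 := by gcongr
    _ = X := Real.sq_sqrt hX0

theorem setIntegral_Ici_le_of_tendsto {f g : ℝ → ℝ} {a L : ℝ} (hf : IntegrableOn f (Ici a))
    (hg : Tendsto g atTop (𝓝 L)) (h : ∀ b ≥ a, ∫ x in a..b, f x ≤ g b) :
    ∫ x in Ici a, f x ≤ L := by
  rw [integral_Ici_eq_integral_Ioi]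
  exact le_of_tendsto_of_tendsto
    (intervalIntegral_tendsto_integral_Ioi a (hf.mono_set Ioi_subset_Ici_self) tendsto_id) hg
    ((eventually_ge_atTop a).mono h)

section HalfLine

variable {𝕜 E : Type*} [RCLike 𝕜] [NormedAddCommGroup E] [InnerProductSpace 𝕜 E]
  [NormedSpace ℝ E] [IsScalarTower ℝ 𝕜 E] {S : E →L[𝕜] E} {Q : ℝ → E →ₗ[𝕜] E} {U F : ℝ → E}
  {K θ m : ℝ}

theorem energy_inequality_Ici (hS : (S : E →ₗ[𝕜] E).IsSymmetric) (hSK : ‖S‖ ≤ K)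
    (hF : ContinuousOn F (Ici 0)) (hFi : IntegrableOn (fun z => ‖F z‖) (Ici 0))
    (hU : ∀ z ∈ Ici (0 : ℝ), HasDerivWithinAt U (Q z (U z) + F z) (Ici 0) z)
    (hQ : ∀ z ∈ Ici (0 : ℝ), ∀ u, θ * ‖u‖ ^ 2 ≤ re ⟪S (Q z u), u⟫_𝕜)
    (hm : ∀ z ∈ Ici (0 : ℝ), ‖U z‖ ≤ m) {a b : ℝ} (ha : 0 ≤ a) (hab : a ≤ b) :
    ∫ x in a..b, 2 * θ * ‖U x‖ ^ 2
      ≤ re ⟪S (U b), U b⟫_𝕜 - re ⟪S (U a), U a⟫_𝕜 + 2 * K * m * ∫ x in Ici 0, ‖F x‖ := by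
  have hsub : Icc a b ⊆ Ici 0 := fun x hx => ha.trans hx.1
  have hUc : ContinuousOn U (Icc a b) := fun z hz => (hU z (hsub hz)).continuousWithinAt.mono hsub
  have hm0 : 0 ≤ m := (norm_nonneg _).trans (hm a ha)
  have henergy := energy_inequality hS hSK hab (hF.mono hsub)
    (fun z hz => (hU z (hsub hz)).mono hsub) (fun z hz => hQ z (hsub hz))
  have hsource : ∫ x in a..b, ‖F x‖ * ‖U x‖ ≤ m * ∫ x in Ici 0, ‖F x‖ :=
    calc ∫ x in a..b, ‖F x‖ * ‖U x‖ ≤ ∫ x in a..b, m * ‖F x‖ :=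
          intervalIntegral.integral_mono_on hab
            (((hF.mono hsub).norm.mul hUc.norm).intervalIntegrable_of_Icc hab)
            (((hF.mono hsub).norm.const_smul m).intervalIntegrable_of_Icc hab)
            fun x hx => by rw [mul_comm]; gcongr; exact hm x (hsub hx)
      _ = m * ∫ x in Ioc a b, ‖F x‖ := by
          rw [intervalIntegral.integral_const_mul, intervalIntegral.integral_of_le hab]
      _ ≤ m * ∫ x in Ici 0, ‖F x‖ :=
          mul_le_mul_of_nonneg_left (setIntegral_mono_set hFi (.of_forall fun x => norm_nonneg _)
            (Ioc_subset_Icc_self.trans hsub).eventuallyLE) hm0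
  rw [intervalIntegral.integral_const_mul]
  linarith [mul_le_mul_of_nonneg_left hsource ((norm_nonneg S).trans hSK)]

theorem incoming_estimate (hS : (S : E →ₗ[𝕜] E).IsSymmetric) (hSK : ‖S‖ ≤ K)
    (hSpos : ∀ u, ‖u‖ ^ 2 ≤ re ⟪S u, u⟫_𝕜) (hθ : 0 ≤ θ)
    (hF : ContinuousOn F (Ici 0)) (hFi : IntegrableOn (fun z => ‖F z‖) (Ici 0))
    (hU : ∀ z ∈ Ici (0 : ℝ), HasDerivWithinAt U (Q z (U z) + F z) (Ici 0) z)
    (hQ : ∀ z ∈ Ici (0 : ℝ), ∀ u, θ * ‖u‖ ^ 2 ≤ re ⟪S (Q z u), u⟫_𝕜)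
    (hbdd : BddAbove ((fun z => ‖U z‖) '' Ici 0))
    (hU2 : IntegrableOn (fun z => ‖U z‖ ^ 2) (Ici 0)) (hU0 : Tendsto U atTop (𝓝 0)) :
    (∀ t ∈ Ici (0 : ℝ), ‖U t‖ ^ 2 ≤ 4 * (K * ∫ x in Ici 0, ‖F x‖) ^ 2) ∧
      θ * ∫ x in Ici 0, ‖U x‖ ^ 2 ≤ 2 * (K * ∫ x in Ici 0, ‖F x‖) ^ 2 := by
  set I := ∫ x in Ici 0, ‖F x‖
  obtain ⟨m, hm⟩ := Real.exists_isLUB (nonempty_Ici.image _) hbdd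
  have hmU : ∀ z ∈ Ici (0 : ℝ), ‖U z‖ ≤ m := fun z hz => hm.1 (mem_image_of_mem _ hz)
  have henergy : Tendsto (fun b => re ⟪S (U b), U b⟫_𝕜) atTop (𝓝 0) := by
    simpa [Function.comp_def] using
      ((continuous_re.comp (S.continuous.inner continuous_id)).tendsto 0).comp hU0
  have key : ∀ a ∈ Ici (0 : ℝ),
      ‖U a‖ ^ 2 + ∫ x in Ici a, 2 * θ * ‖U x‖ ^ 2 ≤ 2 * K * m * I := by
    intro a ha
    have := setIntegral_Ici_le_of_tendsto ((hU2.mono_set (Ici_subset_Ici.2 ha)).const_mul (2 * θ))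
      ((henergy.sub_const (‖U a‖ ^ 2)).add_const (2 * K * m * I)) fun b hb =>
        (energy_inequality_Ici hS hSK hF hFi hU hQ hmU ha hb).trans (by linarith [hSpos (U a)])
    linarith
  have hsup : ∀ t ∈ Ici (0 : ℝ), ‖U t‖ ^ 2 ≤ 2 * K * m * I := fun t ht => by
    have : 0 ≤ ∫ x in Ici t, 2 * θ * ‖U x‖ ^ 2 :=
      setIntegral_nonneg measurableSet_Ici fun x _ => by positivity
    linarith [key t ht]
  have habsorb : 2 * K * m * I ≤ 4 * (K * I) ^ 2 := by
    have := hm.sq_le_of_forall_sq_le nonempty_Ici (fun _ _ => norm_nonneg _) hsup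
    have := add_two_mul_le_of_sq_le (A := 0) (b := K * I) (m := m) (by linarith)
    linarith
  refine ⟨fun t ht => (hsup t ht).trans habsorb, ?_⟩
  have := key 0 self_mem_Ici
  rw [integral_const_mul] at this
  linarith [sq_nonneg ‖U 0‖]

theorem outgoing_estimate (hS : (S : E →ₗ[𝕜] E).IsSymmetric) (hSK : ‖S‖ ≤ K)
    (hSneg : ∀ u, re ⟪S u, u⟫_𝕜 ≤ -‖u‖ ^ 2) (hθ : 0 ≤ θ)
    (hF : ContinuousOn F (Ici 0)) (hFi : IntegrableOn (fun z => ‖F z‖) (Ici 0))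
    (hU : ∀ z ∈ Ici (0 : ℝ), HasDerivWithinAt U (Q z (U z) + F z) (Ici 0) z)
    (hQ : ∀ z ∈ Ici (0 : ℝ), ∀ u, θ * ‖u‖ ^ 2 ≤ re ⟪S (Q z u), u⟫_𝕜)
    (hbdd : BddAbove ((fun z => ‖U z‖) '' Ici 0))
    (hU2 : IntegrableOn (fun z => ‖U z‖ ^ 2) (Ici 0)) :
    ∀ t ∈ Ici (0 : ℝ), ‖U t‖ ^ 2 + θ * ∫ x in Ici 0, ‖U x‖ ^ 2
      ≤ 3 * K * ‖U 0‖ ^ 2 + 6 * (K * ∫ x in Ici 0, ‖F x‖) ^ 2 := by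
  set I := ∫ x in Ici 0, ‖F x‖
  obtain ⟨m, hm⟩ := Real.exists_isLUB (nonempty_Ici.image _) hbdd
  have hmU : ∀ z ∈ Ici (0 : ℝ), ‖U z‖ ≤ m := fun z hz => hm.1 (mem_image_of_mem _ hz)
  set X := K * ‖U 0‖ ^ 2 + 2 * (K * I) * m
  have key : ∀ b ∈ Ici (0 : ℝ), ‖U b‖ ^ 2 + ∫ x in (0)..b, 2 * θ * ‖U x‖ ^ 2 ≤ X := by
    intro b hb
    have := energy_inequality_Ici hS hSK hF hFi hU hQ hmU le_rfl hb
    linarith [hSneg (U b), neg_abs_le (re ⟪S (U 0), U 0⟫_𝕜), abs_re_inner_apply_self_le hSK (U 0)]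
  have hint_nonneg : ∀ b ∈ Ici (0 : ℝ), 0 ≤ ∫ x in (0)..b, 2 * θ * ‖U x‖ ^ 2 :=
    fun b hb => intervalIntegral.integral_nonneg hb fun x _ => by positivity
  have hsup : ∀ t ∈ Ici (0 : ℝ), ‖U t‖ ^ 2 ≤ X := fun t ht => by
    linarith [key t ht, hint_nonneg t ht]
  have hint : ∫ x in Ici 0, 2 * θ * ‖U x‖ ^ 2 ≤ X :=
    setIntegral_Ici_le_of_tendsto (hU2.const_mul _) tendsto_const_nhds fun b hb => by
      linarith [key b hb, sq_nonneg ‖U b‖]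
  have habsorb : X ≤ 2 * (K * ‖U 0‖ ^ 2) + 4 * (K * I) ^ 2 :=
    add_two_mul_le_of_sq_le (hm.sq_le_of_forall_sq_le nonempty_Ici (fun _ _ => norm_nonneg _) hsup)
  rw [integral_const_mul] at hint
  intro t ht
  linarith [hsup t ht]

end HalfLine

section Matrix

variable {𝕜 n : Type*} [RCLike 𝕜] [Fintype n] [DecidableEq n]

theorem Matrix.re_inner_toEuclideanLin_smul_add_conjTranspose (A : Matrix n n 𝕜)
    (u : EuclideanSpace 𝕜 n) :
    re ⟪toEuclideanLin ((2⁻¹ : 𝕜) • (A + Aᴴ)) u, u⟫_𝕜 = re ⟪toEuclideanLin A u, u⟫_𝕜 := by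
  rw [map_smul, map_add, LinearMap.smul_apply, LinearMap.add_apply,
    toEuclideanLin_conjTranspose_eq_adjoint, inner_smul_left, inner_add_left,
    LinearMap.adjoint_inner_left, ← inner_conj_symm u, RCLike.add_conj, map_inv₀, map_ofNat,
    ← mul_assoc, inv_mul_cancel₀ two_ne_zero, one_mul, ofReal_re]

theorem Matrix.re_inner_toEuclideanLin_smul_mul_add_conjTranspose (A B : Matrix n n 𝕜)
    (u : EuclideanSpace 𝕜 n) :
    re ⟪toEuclideanLin ((2⁻¹ : 𝕜) • (A * B + (A * B)ᴴ)) u, u⟫_𝕜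
      = re ⟪toEuclideanCLM (𝕜 := 𝕜) A (toEuclideanLin B u), u⟫_𝕜 := by
  rw [re_inner_toEuclideanLin_smul_add_conjTranspose]
  change re ⟪toEuclideanCLM (𝕜 := 𝕜) (A * B) u, u⟫_𝕜 = _
  rw [map_mul]
  rfl

theorem Matrix.IsHermitian.isSymmetric_toEuclideanCLM {A : Matrix n n 𝕜} (hA : A.IsHermitian) :
    (toEuclideanCLM (𝕜 := 𝕜) A : EuclideanSpace 𝕜 n →ₗ[𝕜] EuclideanSpace 𝕜 n).IsSymmetric :=
  isSymmetric_toEuclideanLin_iff.2 hA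

end Matrix

theorem stmt_11_general (Kp Km c : ℝ) :
    ∃ C : ℝ, 0 < C ∧
      ∀ (np nm : ℕ), 1 ≤ np → 1 ≤ nm →
      ∀ (θ : ℝ), 0 < θ →
      ∀ (Qp : ℝ → Matrix (Fin np) (Fin np) ℂ)
        (Qm : ℝ → Matrix (Fin nm) (Fin nm) ℂ)
        (Fp Up : ℝ → EuclideanSpace ℂ (Fin np))
        (Fm Um : ℝ → EuclideanSpace ℂ (Fin nm))
        (Sp : Matrix (Fin np) (Fin np) ℂ)
        (Sm : Matrix (Fin nm) (Fin nm) ℂ),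
        ContinuousOn Qp (Ici 0) → ContinuousOn Qm (Ici 0) →
        ContinuousOn Fp (Ici 0) → ContinuousOn Fm (Ici 0) →
        IntegrableOn (fun z => ‖Fp z‖) (Ici 0) →
        IntegrableOn (fun z => ‖Fm z‖) (Ici 0) →
        (∃ M : ℝ, ∀ z ∈ Ici (0:ℝ), ‖Up z‖ ≤ M ∧ ‖Um z‖ ≤ M) →
        IntegrableOn (fun z => ‖Up z‖ ^ 2) (Ici 0) →
        IntegrableOn (fun z => ‖Um z‖ ^ 2) (Ici 0) →
        (∀ z ∈ Ici (0:ℝ), HasDerivWithinAt Up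
            (Matrix.toEuclideanLin (Qp z) (Up z) + Fp z) (Ici 0) z) →
        (∀ z ∈ Ici (0:ℝ), HasDerivWithinAt Um
            (Matrix.toEuclideanLin (Qm z) (Um z) + Fm z) (Ici 0) z) →
        Filter.Tendsto Up Filter.atTop (nhds 0) →
        Filter.Tendsto Um Filter.atTop (nhds 0) →
        Sp.IsHermitian → Sm.IsHermitian →
        (∀ u : EuclideanSpace ℂ (Fin np),
            ‖u‖ ^ 2 ≤ (inner (𝕜 := ℂ) (Matrix.toEuclideanLin Sp u) u).re) →
        (∀ u : EuclideanSpace ℂ (Fin nm),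
            (inner (𝕜 := ℂ) (Matrix.toEuclideanLin Sm u) u).re ≤ -‖u‖ ^ 2) →
        (∀ z ∈ Ici (0:ℝ), ∀ u : EuclideanSpace ℂ (Fin np),
            θ * ‖u‖ ^ 2 ≤
              (inner (𝕜 := ℂ) (Matrix.toEuclideanLin
                ((2⁻¹ : ℂ) • (Sp * Qp z + (Sp * Qp z)ᴴ)) u) u).re) →
        (∀ z ∈ Ici (0:ℝ), ∀ u : EuclideanSpace ℂ (Fin nm),
            θ * ‖u‖ ^ 2 ≤
              (inner (𝕜 := ℂ) (Matrix.toEuclideanLin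
                ((2⁻¹ : ℂ) • (Sm * Qm z + (Sm * Qm z)ᴴ)) u) u).re) →
        ‖Matrix.toEuclideanCLM (𝕜 := ℂ) Sp‖ ≤ Kp →
        ‖Matrix.toEuclideanCLM (𝕜 := ℂ) Sm‖ ≤ Km →
        ‖Um 0‖ ≤ c * ‖Up 0‖ →
        ∀ z ∈ Ici (0:ℝ),
          ‖Up z‖ ^ 2 + ‖Um z‖ ^ 2
            + θ * ((∫ x in Ici (0:ℝ), ‖Up x‖ ^ 2) + ∫ x in Ici (0:ℝ), ‖Um x‖ ^ 2) ≤
          C * ((∫ x in Ici (0:ℝ), ‖Fp x‖) + ∫ x in Ici (0:ℝ), ‖Fm x‖) ^ 2 := by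
  -- `|Km|` keeps `C > 0` for every `Km`; only the hypotheses give `0 ≤ Km`.
  refine ⟨6 * Kp ^ 2 + 12 * |Km| * c ^ 2 * Kp ^ 2 + 6 * Km ^ 2 + 1, by positivity, ?_⟩
  intro np nm _ _ θ hθ Qp Qm Fp Up Fm Um Sp Sm _ _ hFp hFm hFpi hFmi ⟨M, hM⟩ hUp2 hUm2 hUp hUm
    hUp0 _ hSp hSm hSpos hSneg hSQp hSQm hKp hKm hbc z hz
  obtain ⟨hUp_sup, hUp_int⟩ := incoming_estimate hSp.isSymmetric_toEuclideanCLM hKp hSpos hθ.le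
    hFp hFpi hUp
    (fun z hz u => (hSQp z hz u).trans_eq
      (re_inner_toEuclideanLin_smul_mul_add_conjTranspose Sp (Qp z) u))
    ⟨M, forall_mem_image.2 fun z hz => (hM z hz).1⟩ hUp2 hUp0
  have hUm_est := outgoing_estimate hSm.isSymmetric_toEuclideanCLM hKm hSneg hθ.le hFm hFmi hUm
    (fun z hz u => (hSQm z hz u).trans_eq
      (re_inner_toEuclideanLin_smul_mul_add_conjTranspose Sm (Qm z) u))
    ⟨M, forall_mem_image.2 fun z hz => (hM z hz).2⟩ hUm2 z hz
  set Ip := ∫ x in Ici 0, ‖Fp x‖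
  set Im := ∫ x in Ici 0, ‖Fm x‖
  have hIp : 0 ≤ Ip := setIntegral_nonneg measurableSet_Ici fun x _ => norm_nonneg _
  have hIm : 0 ≤ Im := setIntegral_nonneg measurableSet_Ici fun x _ => norm_nonneg _
  have hKm0 : 0 ≤ Km := (norm_nonneg _).trans hKm
  have hboundary : 3 * Km * ‖Um 0‖ ^ 2 ≤ 12 * |Km| * c ^ 2 * Kp ^ 2 * Ip ^ 2 :=
    calc 3 * Km * ‖Um 0‖ ^ 2 ≤ 3 * Km * (c ^ 2 * (4 * (Kp * Ip) ^ 2)) := by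
          gcongr
          calc ‖Um 0‖ ^ 2 ≤ (c * ‖Up 0‖) ^ 2 := by gcongr
            _ ≤ c ^ 2 * (4 * (Kp * Ip) ^ 2) := by
              rw [mul_pow]; gcongr; exact hUp_sup 0 self_mem_Ici
      _ = 12 * |Km| * c ^ 2 * Kp ^ 2 * Ip ^ 2 := by rw [abs_of_nonneg hKm0]; ring
  calc _ ≤ (6 * Kp ^ 2 + 12 * |Km| * c ^ 2 * Kp ^ 2) * Ip ^ 2 + 6 * Km ^ 2 * Im ^ 2 := by
        linarith [hUp_sup z hz]
    _ ≤ _ := mul_sq_add_mul_sq_le (by positivity) (by positivity) hIp hIm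

/-- Combination of the two halves of the symmetrizer energy lemma (Lemma 4.2) with the
Evans-condition boundary control: for coupled incoming (positive symmetrizer `S₊`) and
outgoing (negative symmetrizer `S₋`) blocks with boundary coupling `|U₋(0)| ≤ c|U₊(0)|`,
`sup (|U₊|² + |U₋|²) + θ ∫ (|U₊|² + |U₋|²) ≤ C (∫|F₊| + ∫|F₋|)²`,
with `C` depending only on `‖S₊‖, ‖S₋‖, c`. -/
theorem stmt_11 (Kp Km c : ℝ) (hc : 0 ≤ c) :
    ∃ C : ℝ, 0 < C ∧
      ∀ (np nm : ℕ), 1 ≤ np → 1 ≤ nm →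
      ∀ (θ : ℝ), 0 < θ →
      ∀ (Qp : ℝ → Matrix (Fin np) (Fin np) ℂ)
        (Qm : ℝ → Matrix (Fin nm) (Fin nm) ℂ)
        (Fp Up : ℝ → EuclideanSpace ℂ (Fin np))
        (Fm Um : ℝ → EuclideanSpace ℂ (Fin nm))
        (Sp : Matrix (Fin np) (Fin np) ℂ)
        (Sm : Matrix (Fin nm) (Fin nm) ℂ),
        ContinuousOn Qp (Ici 0) → ContinuousOn Qm (Ici 0) →
        ContinuousOn Fp (Ici 0) → ContinuousOn Fm (Ici 0) →
        IntegrableOn (fun z => ‖Fp z‖) (Ici 0) →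
        IntegrableOn (fun z => ‖Fm z‖) (Ici 0) →
        (∃ M : ℝ, ∀ z ∈ Ici (0:ℝ), ‖Up z‖ ≤ M ∧ ‖Um z‖ ≤ M) →
        IntegrableOn (fun z => ‖Up z‖ ^ 2) (Ici 0) →
        IntegrableOn (fun z => ‖Um z‖ ^ 2) (Ici 0) →
        (∀ z ∈ Ici (0:ℝ), HasDerivWithinAt Up
            (Matrix.toEuclideanLin (Qp z) (Up z) + Fp z) (Ici 0) z) →
        (∀ z ∈ Ici (0:ℝ), HasDerivWithinAt Um
            (Matrix.toEuclideanLin (Qm z) (Um z) + Fm z) (Ici 0) z) →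
        Filter.Tendsto Up Filter.atTop (nhds 0) →
        Filter.Tendsto Um Filter.atTop (nhds 0) →
        Sp.IsHermitian → Sm.IsHermitian →
        (∀ u : EuclideanSpace ℂ (Fin np),
            ‖u‖ ^ 2 ≤ (inner (𝕜 := ℂ) (Matrix.toEuclideanLin Sp u) u).re) →
        (∀ u : EuclideanSpace ℂ (Fin nm),
            (inner (𝕜 := ℂ) (Matrix.toEuclideanLin Sm u) u).re ≤ -‖u‖ ^ 2) →
        (∀ z ∈ Ici (0:ℝ), ∀ u : EuclideanSpace ℂ (Fin np),
            θ * ‖u‖ ^ 2 ≤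
              (inner (𝕜 := ℂ) (Matrix.toEuclideanLin
                ((2⁻¹ : ℂ) • (Sp * Qp z + (Sp * Qp z)ᴴ)) u) u).re) →
        (∀ z ∈ Ici (0:ℝ), ∀ u : EuclideanSpace ℂ (Fin nm),
            θ * ‖u‖ ^ 2 ≤
              (inner (𝕜 := ℂ) (Matrix.toEuclideanLin
                ((2⁻¹ : ℂ) • (Sm * Qm z + (Sm * Qm z)ᴴ)) u) u).re) →
        ‖Matrix.toEuclideanCLM (𝕜 := ℂ) Sp‖ ≤ Kp →
        ‖Matrix.toEuclideanCLM (𝕜 := ℂ) Sm‖ ≤ Km →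
        ‖Um 0‖ ≤ c * ‖Up 0‖ →
        ∀ z ∈ Ici (0:ℝ),
          ‖Up z‖ ^ 2 + ‖Um z‖ ^ 2
            + θ * ((∫ x in Ici (0:ℝ), ‖Up x‖ ^ 2) + ∫ x in Ici (0:ℝ), ‖Um x‖ ^ 2) ≤
          C * ((∫ x in Ici (0:ℝ), ‖Fp x‖) + ∫ x in Ici (0:ℝ), ‖Fm x‖) ^ 2 :=
  stmt_11_general Kp Km c
end
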